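/- arXiv:1604.03408 — 7 statements merged into one kernel-verified Lean document; each statement's English description precedes it below -/
import Mathlib

section
/- Let (X, 𝔉) be a measurable space, let π be a probability measure on X, let (ν_t)_{t≥0} be a family of probability measures on X, let F : X → [1, ∞) be measurable, and let ε ∈ (0,1), A > 0 and M ≥ 1 be constants such that ∫ F dν_t ≤ M·exp(√(2At)) for all t ≥ 0 and ∫ F^{1−ε} dπ = ∞. Then, with c_* = (2/ε − 1)·√(2A) and h_* = (1/2)·(2M)^{1−2/ε}, there exists a sequence (t_n)_{n≥0} increasing to infinity such that ‖ν_{t_n} − π‖_TV ≥ h_*·exp(−c_*·√(t_n)) for every n. -/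
/-!
Since `∫ F^{1-ε} dπ = ∞` and `π` is finite, the layer-cake formula forces the tail `π{F ≥ R}` to
exceed `R^{ε/2-1}` for arbitrarily large `R`. For such `R` choose `t` with
`M e^{√(2At)} = R^{ε/2} / 2`: Markov's inequality gives `ν_t{F ≥ R} ≤ R^{ε/2-1} / 2`, so the set
`{F ≥ R}` shows `‖ν_t − π‖_TV ≥ R^{ε/2-1} / 2`, and this is exactly `h_* e^{-c_* √t}`. These
times `t` tend to infinity with `R`, and a strictly increasing subsequence of them is `(t_n)`.
-/

open MeasureTheory Filter

/-- Total variation distance between two measures: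
`sup_B |μ(B) − ν(B)|` over measurable sets `B`. It satisfies
`tvDist μ ν ≥ ν(B) − μ(B)` for every measurable set `B`. -/
noncomputable def tvDist {X : Type*} [MeasurableSpace X] (μ ν : Measure X) : ℝ :=
  ⨆ B : {s : Set X // MeasurableSet s}, |(μ B.1).toReal - (ν B.1).toReal|

open scoped ENNReal

theorem Filter.Frequently.exists_strictMono_tendsto_atTop {α : Type*} [LinearOrder α]
    [NoMaxOrder α] [(atTop : Filter α).IsCountablyGenerated] {p : α → Prop}
    (h : ∃ᶠ t in atTop, p t) :
    ∃ t : ℕ → α, StrictMono t ∧ Tendsto t atTop atTop ∧ ∀ n, p (t n) := by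
  obtain ⟨x, hx, hpx⟩ := exists_seq_forall_of_frequently h
  obtain ⟨φ, hφ, hxφ⟩ := strictMono_subseq_of_tendsto_atTop hx
  exact ⟨x ∘ φ, hxφ, hx.comp hφ.tendsto_atTop, fun n => hpx (φ n)⟩

section TotalVariation

variable {X : Type*} [MeasurableSpace X] {μ ν : Measure X} [IsFiniteMeasure μ] [IsFiniteMeasure ν]

theorem measure_sub_measure_le_tvDist {B : Set X} (hB : MeasurableSet B) :
    (ν B).toReal - (μ B).toReal ≤ tvDist μ ν := by
  have hbdd : BddAbove (Set.range fun C : {s : Set X // MeasurableSet s} =>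
      |(μ C.1).toReal - (ν C.1).toReal|) := by
    refine ⟨μ.real Set.univ + ν.real Set.univ, ?_⟩
    rintro _ ⟨⟨C, -⟩, rfl⟩
    change |μ.real C - ν.real C| ≤ _
    have hμ : μ.real C ≤ μ.real Set.univ := measureReal_mono (Set.subset_univ _)
    have hν : ν.real C ≤ ν.real Set.univ := measureReal_mono (Set.subset_univ _)
    have hμ0 : 0 ≤ μ.real C := measureReal_nonneg
    have hν0 : 0 ≤ ν.real C := measureReal_nonneg
    exact abs_le.2 ⟨by linarith, by linarith⟩
  calc (ν B).toReal - (μ B).toReal ≤ |(μ B).toReal - (ν B).toReal| :=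
      (le_abs_self _).trans (abs_sub_comm _ _).le
    _ ≤ tvDist μ ν := le_ciSup hbdd ⟨B, hB⟩

theorem measure_sub_div_le_tvDist {F : X → ℝ} (hF : Measurable F) {R m : ℝ} (hR : 0 < R)
    (hm0 : 0 ≤ m) (hm : ∫⁻ x, ENNReal.ofReal (F x) ∂μ ≤ ENNReal.ofReal m) :
    (ν {x | R ≤ F x}).toReal - m / R ≤ tvDist μ ν := by
  have hmarkov : μ {x | R ≤ F x} ≤ ENNReal.ofReal (m / R) := calc
    μ {x | R ≤ F x} ≤ μ {x | ENNReal.ofReal R ≤ ENNReal.ofReal (F x)} :=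
      measure_mono fun x hx => ENNReal.ofReal_le_ofReal hx
    _ ≤ (∫⁻ x, ENNReal.ofReal (F x) ∂μ) / ENNReal.ofReal R :=
      meas_ge_le_lintegral_div (ENNReal.measurable_ofReal.comp hF).aemeasurable
        (by simpa using hR) ENNReal.ofReal_ne_top
    _ ≤ ENNReal.ofReal m / ENNReal.ofReal R := by gcongr
    _ = ENNReal.ofReal (m / R) := (ENNReal.ofReal_div_of_pos hR).symm
  have := measure_sub_measure_le_tvDist (μ := μ) (ν := ν)
    (measurableSet_le measurable_const hF : MeasurableSet {x | R ≤ F x})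
  have := ENNReal.toReal_le_of_le_ofReal (by positivity) hmarkov
  linarith

end TotalVariation

section Tail

variable {X : Type*} [MeasurableSpace X] {μ : Measure X} [IsFiniteMeasure μ] {f : X → ℝ}
  {p q : ℝ}

theorem lintegral_rpow_lt_top_of_meas_le_rpow_neg (hf0 : 0 ≤ᵐ[μ] f) (hf : AEMeasurable f μ)
    (hp : 0 < p) (hpq : p < q)
    (htail : ∀ᶠ R in atTop, μ {x | R ≤ f x} ≤ ENNReal.ofReal (R ^ (-q))) :
    ∫⁻ x, ENNReal.ofReal (f x ^ p) ∂μ < ∞ := by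
  obtain ⟨R₀, hR₀⟩ := eventually_atTop.1 htail
  set c := max R₀ 1
  have hc : 0 < c := lt_max_of_lt_right one_pos
  rw [lintegral_rpow_eq_lintegral_meas_le_mul μ hf0 hf hp,
    ← Set.Ioc_union_Ioi_eq_Ioi hc.le]
  refine ENNReal.mul_lt_top ENNReal.ofReal_lt_top
    ((lintegral_union_le _ _ _).trans_lt (ENNReal.add_lt_top.2 ⟨?_, ?_⟩))
  · calc ∫⁻ t in Set.Ioc 0 c, μ {x | t ≤ f x} * ENNReal.ofReal (t ^ (p - 1))
        ≤ ∫⁻ t in Set.Ioc 0 c, μ Set.univ * ENNReal.ofReal (t ^ (p - 1)) :=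
          setLIntegral_mono' measurableSet_Ioc fun t _ => by gcongr; exact Set.subset_univ _
      _ < ∞ := by
        rw [lintegral_const_mul' _ _ (measure_ne_top _ _)]
        exact ENNReal.mul_lt_top (measure_lt_top _ _)
          (intervalIntegral.intervalIntegrable_rpow' (by linarith)).1.setLIntegral_lt_top
  · calc ∫⁻ t in Set.Ioi c, μ {x | t ≤ f x} * ENNReal.ofReal (t ^ (p - 1))
        ≤ ∫⁻ t in Set.Ioi c, ENNReal.ofReal (t ^ (p - q - 1)) := by
          refine setLIntegral_mono' measurableSet_Ioi fun t (ht : c < t) => ?_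
          have ht0 : 0 < t := hc.trans ht
          calc μ {x | t ≤ f x} * ENNReal.ofReal (t ^ (p - 1))
              ≤ ENNReal.ofReal (t ^ (-q)) * ENNReal.ofReal (t ^ (p - 1)) := by
                gcongr; exact hR₀ t ((le_max_left _ _).trans ht.le)
            _ = ENNReal.ofReal (t ^ (p - q - 1)) := by
                rw [← ENNReal.ofReal_mul (by positivity), ← Real.rpow_add ht0]; ring_nf
      _ < ∞ := (integrableOn_Ioi_rpow_of_lt (by linarith) hc).setLIntegral_lt_top

theorem frequently_rpow_neg_le_meas_of_lintegral_rpow_eq_top (hf0 : 0 ≤ᵐ[μ] f)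
    (hf : AEMeasurable f μ) (hp : 0 < p) (hpq : p < q)
    (h : ∫⁻ x, ENNReal.ofReal (f x ^ p) ∂μ = ∞) :
    ∃ᶠ R in atTop, ENNReal.ofReal (R ^ (-q)) ≤ μ {x | R ≤ f x} := fun htail =>
  (lintegral_rpow_lt_top_of_meas_le_rpow_neg hf0 hf hp hpq
    (htail.mono fun _ hR => (not_le.1 hR).le)).ne h

end Tail

theorem exp_sqrt_mul_log_sq_div {a y : ℝ} (ha : 0 < a) (hy : 1 ≤ y) :
    Real.exp (√(a * (Real.log y ^ 2 / a))) = y := by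
  rw [mul_div_cancel₀ _ ha.ne', Real.sqrt_sq (Real.log_nonneg hy), Real.exp_log (by linarith)]

theorem half_mul_rpow_mul_exp_eq {ε M A t R : ℝ} (hε : ε ≠ 0) (hM : 0 < M) (hA : 0 ≤ A)
    (hR : 0 < R) (h : 2 * M * Real.exp (√(2 * A * t)) = R ^ (ε / 2)) :
    (1 / 2) * (2 * M) ^ (1 - 2 / ε) * Real.exp (-((2 / ε - 1) * √(2 * A)) * √t)
      = R ^ (ε / 2 - 1) / 2 := by
  have hexp : Real.exp (-((2 / ε - 1) * √(2 * A)) * √t)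
      = Real.exp (√(2 * A * t)) ^ (1 - 2 / ε) := by
    rw [← Real.exp_mul, Real.sqrt_mul (by positivity : (0 : ℝ) ≤ 2 * A) t]; ring_nf
  have hexponent : ε / 2 * (1 - 2 / ε) = ε / 2 - 1 := by field_simp
  rw [mul_assoc, hexp, ← Real.mul_rpow (by positivity) (Real.exp_pos _).le, h,
    ← Real.rpow_mul hR.le, hexponent]
  ring

theorem half_mul_rpow_mul_exp_le_tvDist {X : Type*} [MeasurableSpace X] {μ π : Measure X}
    [IsFiniteMeasure μ] [IsFiniteMeasure π] {F : X → ℝ} (hF : Measurable F) {ε M A t R : ℝ}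
    (hε : ε ≠ 0) (hM : 0 < M) (hA : 0 ≤ A) (hR : 0 < R)
    (hmoment : ∫⁻ x, ENNReal.ofReal (F x) ∂μ ≤ ENNReal.ofReal (M * Real.exp (√(2 * A * t))))
    (htime : 2 * M * Real.exp (√(2 * A * t)) = R ^ (ε / 2))
    (htail : ENNReal.ofReal (R ^ (ε / 2 - 1)) ≤ π {x | R ≤ F x}) :
    (1 / 2) * (2 * M) ^ (1 - 2 / ε) * Real.exp (-((2 / ε - 1) * √(2 * A)) * √t)
      ≤ tvDist μ π := by
  have htv := measure_sub_div_le_tvDist (ν := π) hF hR (by positivity) hmoment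
  have hπR : R ^ (ε / 2 - 1) ≤ (π {x | R ≤ F x}).toReal :=
    (ENNReal.ofReal_le_iff_le_toReal (measure_ne_top _ _)).1 htail
  have hμR : M * Real.exp (√(2 * A * t)) / R = R ^ (ε / 2 - 1) / 2 := by
    rw [Real.rpow_sub_one hR.ne', ← htime]; ring
  rw [half_mul_rpow_mul_exp_eq hε hM hA hR htime]
  linarith

theorem stmt_0 {X : Type*} [MeasurableSpace X]
    (π : Measure X) [IsProbabilityMeasure π]
    (ν : ℝ → Measure X) (hν : ∀ t : ℝ, 0 ≤ t → IsProbabilityMeasure (ν t))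
    (F : X → ℝ) (hFmeas : Measurable F) (hF1 : ∀ x, 1 ≤ F x)
    (ε A M : ℝ) (hε : ε ∈ Set.Ioo (0 : ℝ) 1) (hA : 0 < A) (hM : 1 ≤ M)
    (hbound : ∀ t : ℝ, 0 ≤ t →
      ∫⁻ x, ENNReal.ofReal (F x) ∂(ν t)
        ≤ ENNReal.ofReal (M * Real.exp (Real.sqrt (2 * A * t))))
    (hinf : ∫⁻ x, ENNReal.ofReal (F x ^ (1 - ε)) ∂π = ⊤) :
    ∃ t : ℕ → ℝ, StrictMono t ∧ Tendsto t atTop atTop ∧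
      ∀ n, 0 ≤ t n ∧
        (1 / 2) * (2 * M) ^ (1 - 2 / ε)
            * Real.exp (-((2 / ε - 1) * Real.sqrt (2 * A)) * Real.sqrt (t n))
          ≤ tvDist (ν (t n)) π := by
  obtain ⟨hε0, hε1⟩ := hε
  have hM0 : 0 < 2 * M := by linarith
  have hε2 : 0 < ε / 2 := by positivity
  -- `τ R` is the time at which `M e^{√(2Aτ)} = R^{ε/2} / 2`.
  set τ : ℝ → ℝ := fun R => Real.log (R ^ (ε / 2) / (2 * M)) ^ 2 / (2 * A)
  have hτ : Tendsto τ atTop atTop :=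
    (((tendsto_pow_atTop two_ne_zero).comp (Real.tendsto_log_atTop.comp
      ((tendsto_rpow_atTop hε2).atTop_div_const hM0))).atTop_div_const
      (by positivity))
  have htail := frequently_rpow_neg_le_meas_of_lintegral_rpow_eq_top (μ := π)
    (ae_of_all _ fun x => zero_le_one.trans (hF1 x)) hFmeas.aemeasurable (sub_pos.2 hε1)
    (by linarith : 1 - ε < 1 - ε / 2) hinf
  suffices h : ∃ᶠ t in atTop, 0 ≤ t ∧
      (1 / 2) * (2 * M) ^ (1 - 2 / ε) * Real.exp (-((2 / ε - 1) * √(2 * A)) * √t)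
        ≤ tvDist (ν t) π from h.exists_strictMono_tendsto_atTop
  refine hτ.frequently ((htail.and_eventually ((eventually_gt_atTop 0).and
    ((tendsto_rpow_atTop hε2).eventually_ge_atTop (2 * M)))).mono ?_)
  rintro R ⟨hRπ, hR, hRε⟩
  have hexp : 2 * M * Real.exp (√(2 * A * τ R)) = R ^ (ε / 2) := by
    rw [exp_sqrt_mul_log_sq_div (by positivity) ((one_le_div hM0).2 hRε)]
    field_simp
  have ht : 0 ≤ τ R := by positivity
  have := hν (τ R) ht
  exact ⟨ht, half_mul_rpow_mul_exp_le_tvDist hFmeas hε0.ne' (by linarith) hA.le hR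
    (hbound (τ R) ht) hexp (by rwa [neg_sub] at hRπ)⟩
end

section
/- Let ε ∈ (0,1) satisfy β₊(1 − ε) > 1/T. Then ∫_Ω F^{1−ε} dπ = ∞, where π is the Gibbs measure with density Z^{-1}·exp(−H/T). -/
open Real MeasureTheory Set Filter

noncomputable section

/-- Phase space `Ω = 𝕋² × ℝ²`, realized as `ℝ⁴` with periodicity in the first
two coordinates. A point is `x = (q₁, q₂, p₁, p₂)`. -/
abbrev Pt : Type := ℝ × ℝ × ℝ × ℝ

def q₁ (x : Pt) : ℝ := x.1
def q₂ (x : Pt) : ℝ := x.2.1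
def p₁ (x : Pt) : ℝ := x.2.2.1
def p₂ (x : Pt) : ℝ := x.2.2.2

/-- The Hamiltonian `H(q,p) = (p₁² + p₂²)/2 + W(q₂ − q₁)`. -/
def Ham (W : ℝ → ℝ) (x : Pt) : ℝ := (p₁ x ^ 2 + p₂ x ^ 2) / 2 + W (q₂ x - q₁ x)

/-- The generator
`L = p₁∂_{q₁} + p₂∂_{q₂} + w(q₂−q₁)(∂_{p₁} − ∂_{p₂}) − γp₁∂_{p₁} + γT∂²_{p₁}`,
with `w = W′`. -/
def Lgen (γ T : ℝ) (W : ℝ → ℝ) (f : Pt → ℝ) (x : Pt) : ℝ :=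
  p₁ x * deriv (fun s => f (s, q₂ x, p₁ x, p₂ x)) (q₁ x)
    + p₂ x * deriv (fun s => f (q₁ x, s, p₁ x, p₂ x)) (q₂ x)
    + deriv W (q₂ x - q₁ x) *
        (deriv (fun s => f (q₁ x, q₂ x, s, p₂ x)) (p₁ x)
          - deriv (fun s => f (q₁ x, q₂ x, p₁ x, s)) (p₂ x))
    - γ * p₁ x * deriv (fun s => f (q₁ x, q₂ x, s, p₂ x)) (p₁ x)
    + γ * T * iteratedDeriv 2 (fun s => f (q₁ x, q₂ x, s, p₂ x)) (p₁ x)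

/-- The averaged variable `p̄₂`. -/
def pbar (γ : ℝ) (W W1 W2 : ℝ → ℝ) (x : Pt) : ℝ :=
  p₂ x + W (q₂ x - q₁ x) / (p₂ x - p₁ x)
    + (γ * p₁ x * W1 (q₂ x - q₁ x) - W (q₂ x - q₁ x) ^ 2) / (p₂ x - p₁ x) ^ 3
    + γ ^ 2 * p₁ x * W2 (q₂ x - q₁ x) / (p₂ x - p₁ x) ^ 4
    + 3 * γ ^ 2 * p₁ x ^ 2 * W2 (q₂ x - q₁ x) / (p₂ x - p₁ x) ^ 5

/-- `Ω₀ = {p₁² + p₂² < 1}` (in momentum space). -/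
def Om0 : Set (ℝ × ℝ) := {p | p.1 ^ 2 + p.2 ^ 2 < 1}

/-- `Ω₁ = {|p₂| ≤ (1+δ)|p₁|} ∖ Ω₀`. -/
def Om1 (δ : ℝ) : Set (ℝ × ℝ) := {p | |p.2| ≤ (1 + δ) * |p.1|} \ Om0

/-- `Ω₃ = {|p₂| > (1+2δ)|p₁|} ∖ Ω₀`. -/
def Om3 (δ : ℝ) : Set (ℝ × ℝ) := {p | (1 + 2 * δ) * |p.1| < |p.2|} \ Om0

/-- The test function `F(x) = 1 + exp(β₋H(x)) + ρ(p)·exp(β₊ p̄₂²/2)`. -/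
def Ftest (γ βm βp : ℝ) (W W1 W2 : ℝ → ℝ) (ρ : ℝ × ℝ → ℝ) (x : Pt) : ℝ :=
  1 + exp (βm * Ham W x) + ρ (p₁ x, p₂ x) * exp (βp * pbar γ W W1 W2 x ^ 2 / 2)

end

/-- A continuous `2π`-periodic function is bounded. -/
lemma aux_bdd_of_periodic {f : ℝ → ℝ} (hf : Continuous f)
    (hp : Function.Periodic f (2 * π)) : ∃ C : ℝ, 0 ≤ C ∧ ∀ s, |f s| ≤ C := by
  obtain ⟨C, hC⟩ := (isCompact_Icc : IsCompact (Icc (0:ℝ) (2*π))).exists_bound_of_continuousOn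
    hf.continuousOn
  refine ⟨max C 0, le_max_right _ _, fun s => ?_⟩
  obtain ⟨y, hy, hxy⟩ := hp.exists_mem_Ico₀ (by positivity) s
  rw [hxy]
  exact le_trans (by simpa using hC y (Ico_subset_Icc_self hy)) (le_max_left _ _)

set_option maxHeartbeats 1000000 in
theorem stmt_1
    (γ T δ βm βp ε : ℝ)
    (hγ : 0 < γ) (hT : 0 < T) (hδ : 0 < δ) (hβm : 0 < βm) (hβp : 0 < βp)
    (W W1 W2 : ℝ → ℝ)
    (hW : ContDiff ℝ (⊤ : ℕ∞) W) (hWper : Function.Periodic W (2 * π))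
    (hWint : ∫ s in (0 : ℝ)..(2 * π), W s = 0)
    (hW1 : ContDiff ℝ (⊤ : ℕ∞) W1) (hW1per : Function.Periodic W1 (2 * π))
    (hW1d : deriv W1 = W) (hW1int : ∫ s in (0 : ℝ)..(2 * π), W1 s = 0)
    (hW2 : ContDiff ℝ (⊤ : ℕ∞) W2) (hW2per : Function.Periodic W2 (2 * π))
    (hW2d : deriv W2 = W1)
    (ρ : ℝ × ℝ → ℝ) (hρ : ContDiff ℝ (⊤ : ℕ∞) ρ) (hρ01 : ∀ p, ρ p ∈ Icc (0 : ℝ) 1)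
    (hρ1 : ∀ p ∈ Om3 δ, ρ p = 1) (hρ0 : ∀ p ∈ Om1 δ, ρ p = 0)
    (hε : ε ∈ Ioo (0 : ℝ) 1) (hβpε : 1 / T < βp * (1 - ε))
    (Z : ℝ)
    (hZ : Z = ∫ x in (Icc 0 (2 * π) ×ˢ Icc 0 (2 * π) ×ˢ (univ : Set (ℝ × ℝ))),
      exp (-Ham W x / T)) :
    ∫⁻ x in (Icc 0 (2 * π) ×ˢ Icc 0 (2 * π) ×ˢ (univ : Set (ℝ × ℝ))),
      ENNReal.ofReal
        (Ftest γ βm βp W W1 W2 ρ x ^ (1 - ε) * (Z⁻¹ * exp (-Ham W x / T))) = ⊤ := by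
  obtain ⟨hε0, hε1⟩ := hε
  have hπ : (0:ℝ) < 2 * π := by positivity
  -- a common bound for W, W1, W2
  obtain ⟨C0, hC00, hC0b⟩ := aux_bdd_of_periodic hW.continuous hWper
  obtain ⟨C1, hC10, hC1b⟩ := aux_bdd_of_periodic hW1.continuous hW1per
  obtain ⟨C2, hC20, hC2b⟩ := aux_bdd_of_periodic hW2.continuous hW2per
  set C : ℝ := max C0 (max C1 C2) with hCdef
  have hC0 : 0 ≤ C := le_trans hC00 (le_max_left _ _)
  have hCW : ∀ s, |W s| ≤ C := fun s => le_trans (hC0b s) (le_max_left _ _)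
  have hCW1 : ∀ s, |W1 s| ≤ C :=
    fun s => le_trans (hC1b s) (le_trans (le_max_left _ _) (le_max_right _ _))
  have hCW2 : ∀ s, |W2 s| ≤ C :=
    fun s => le_trans (hC2b s) (le_trans (le_max_right _ _) (le_max_right _ _))
  clear_value C
  set S4 : Set Pt := Icc 0 (2*π) ×ˢ Icc 0 (2*π) ×ˢ (univ : Set (ℝ × ℝ)) with hS4def
  have hHcont : Continuous (Ham W) := by
    unfold Ham q₁ q₂ p₁ p₂
    have := hW.continuous
    fun_prop
  have hcont : Continuous (fun x : Pt => exp (-Ham W x / T)) := by fun_prop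
  have hk : (0:ℝ) < 1/(2*T) := by positivity
  have hIccFin : IsFiniteMeasure ((volume : Measure ℝ).restrict (Icc 0 (2*π))) :=
    ⟨by rw [Measure.restrict_apply_univ, Real.volume_Icc]; exact ENNReal.ofReal_lt_top⟩
  have hS4meas : (volume : Measure Pt).restrict S4
      = ((volume : Measure ℝ).restrict (Icc 0 (2*π))).prod
        ((((volume : Measure ℝ).restrict (Icc 0 (2*π)))).prod (volume : Measure (ℝ × ℝ))) := by
    rw [hS4def]
    rw [MeasureTheory.Measure.volume_eq_prod, ← Measure.prod_restrict,
      MeasureTheory.Measure.volume_eq_prod ℝ (ℝ × ℝ), ← Measure.prod_restrict, Measure.restrict_univ]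
  have hg : Integrable
      (fun x : Pt => exp (C/T) * ((1:ℝ) *
        (exp (-(1/(2*T)) * x.2.2.1^2) * exp (-(1/(2*T)) * x.2.2.2^2))))
      ((volume : Measure Pt).restrict S4) := by
    rw [hS4meas]
    have h2 : Integrable (fun p : ℝ × ℝ =>
        exp (-(1/(2*T)) * p.1^2) * exp (-(1/(2*T)) * p.2^2)) (volume : Measure (ℝ × ℝ)) := by
      rw [MeasureTheory.Measure.volume_eq_prod]
      exact (integrable_exp_neg_mul_sq hk).mul_prod (integrable_exp_neg_mul_sq hk)
    have h1 : Integrable (fun y : ℝ × ℝ × ℝ =>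
        (1:ℝ) * (exp (-(1/(2*T)) * y.2.1^2) * exp (-(1/(2*T)) * y.2.2^2)))
        ((((volume : Measure ℝ).restrict (Icc 0 (2*π)))).prod (volume : Measure (ℝ × ℝ))) :=
      (integrable_const (1:ℝ)).mul_prod h2
    exact (integrable_const (exp (C/T))).mul_prod h1
  have hint : IntegrableOn (fun x : Pt => exp (-Ham W x / T)) S4 := by
    refine Integrable.mono' hg hcont.aestronglyMeasurable.restrict (ae_of_all _ fun x => ?_)
    rw [Real.norm_eq_abs, abs_of_pos (exp_pos _), one_mul, ← Real.exp_add, ← Real.exp_add]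
    apply Real.exp_le_exp.2
    have hWlb : -C ≤ W (x.2.1 - x.1) := neg_le_of_abs_le (hCW (x.2.1 - x.1))
    have heq : C/T + (-(1/(2*T)) * x.2.2.1^2 + -(1/(2*T)) * x.2.2.2^2)
        = (C - (x.2.2.1^2 + x.2.2.2^2)/2) / T := by field_simp; ring
    rw [heq]
    gcongr
    unfold Ham q₁ q₂ p₁ p₂
    linarith
  -- Z > 0
  have hZpos : 0 < Z := by
    rw [hZ]
    rw [setIntegral_pos_iff_support_of_nonneg_ae (ae_of_all _ fun x => (exp_pos _).le) hint]
    have hsupp : Function.support (fun x : Pt => exp (-Ham W x / T)) = univ := by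
      ext x; simp [Function.mem_support, (exp_pos _).ne']
    rw [hsupp, univ_inter, hS4def]
    rw [MeasureTheory.Measure.volume_eq_prod, Measure.prod_prod,
      MeasureTheory.Measure.volume_eq_prod ℝ (ℝ × ℝ), Measure.prod_prod, Real.volume_Icc]
    have huniv : (0:ENNReal) < volume (univ : Set (ℝ × ℝ)) :=
      isOpen_univ.measure_pos volume ⟨(0,0), trivial⟩
    have h2 : (0:ENNReal) < ENNReal.ofReal (2*π - 0) := by
      rw [ENNReal.ofReal_pos]; linarith
    exact ENNReal.mul_pos h2.ne' (ENNReal.mul_pos h2.ne' huniv.ne').ne'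
  -- constants
  set a : ℝ := (1-ε) * βp / 2 with hadef
  set b : ℝ := 1/(2*T) with hbdef
  have h1ε : (0:ℝ) < 1 - ε := by linarith
  have ha0 : 0 < a := by rw [hadef]; exact div_pos (mul_pos h1ε hβp) two_pos
  have hb0 : 0 < b := hk
  have hab : 0 < a - b := by
    have h2 : 1/(2*T) = (1/T)/2 := by ring
    rw [hadef, hbdef, h2]; linarith
  clear_value a b
  set K : ℝ := C + (γ*C + C^2) + γ^2*C + 3*γ^2*C with hKdef
  have hK0 : 0 ≤ K := by rw [hKdef]; positivity
  clear_value K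
  have hCT : 0 ≤ C/T := div_nonneg hC0 hT.le
  set Q : ℝ := (2*a*K + b + C/T)/(a-b) with hQdef
  have hQmul : (a-b) * Q = 2*a*K + b + C/T := by
    rw [hQdef, mul_div_cancel₀ _ hab.ne']
  clear_value Q
  set M : ℝ := max (max 2 (2+2*δ)) (max (K+1) (Q+1)) with hMdef
  have hM2 : (2:ℝ) ≤ M := le_trans (le_max_left _ _) (le_max_left _ _)
  have hMδ : 2+2*δ ≤ M := le_trans (le_max_right _ _) (le_max_left _ _)
  have hMK : K+1 ≤ M := le_trans (le_max_left _ _) (le_max_right _ _)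
  have hMQ : Q+1 ≤ M := le_trans (le_max_right _ _) (le_max_right _ _)
  clear_value M
  -- the bad set
  set S : Set Pt := Icc 0 (2*π) ×ˢ Icc 0 (2*π) ×ˢ Icc 0 1 ×ˢ Ici M with hSdef
  have hSsub : S ⊆ S4 := by
    rw [hSdef, hS4def]
    exact prod_mono_right (prod_mono_right (subset_univ _))
  have hSm : MeasurableSet S := by
    rw [hSdef]
    exact measurableSet_Icc.prod (measurableSet_Icc.prod
      (measurableSet_Icc.prod measurableSet_Ici))
  have hSvol : volume S = ⊤ := by
    rw [hSdef, MeasureTheory.Measure.volume_eq_prod, Measure.prod_prod,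
      MeasureTheory.Measure.volume_eq_prod ℝ (ℝ × ℝ), Measure.prod_prod,
      MeasureTheory.Measure.volume_eq_prod ℝ ℝ, Measure.prod_prod,
      Real.volume_Ici]
    simp only [Real.volume_Icc]
    rw [ENNReal.mul_top (ENNReal.ofReal_pos.2 (by norm_num : (0:ℝ) < 1 - 0)).ne',
      ENNReal.mul_top (ENNReal.ofReal_pos.2 (by linarith : (0:ℝ) < 2*π - 0)).ne',
      ENNReal.mul_top (ENNReal.ofReal_pos.2 (by linarith : (0:ℝ) < 2*π - 0)).ne']
  -- pointwise lower bound on S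
  have hptwise : ∀ x ∈ S, ENNReal.ofReal Z⁻¹ ≤ ENNReal.ofReal
      (Ftest γ βm βp W W1 W2 ρ x ^ (1 - ε) * (Z⁻¹ * exp (-Ham W x / T))) := by
    intro x hx
    rw [hSdef] at hx
    obtain ⟨hq1, ⟨hq2, ⟨hp1, hp2⟩⟩⟩ := hx
    obtain ⟨hp10, hp11⟩ := hp1
    have hp2M : M ≤ x.2.2.2 := hp2
    set P1 : ℝ := x.2.2.1 with hP1e
    set P2 : ℝ := x.2.2.2 with hP2e
    set Δ : ℝ := x.2.1 - x.1 with hΔe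
    have hP2big : 2 ≤ P2 := le_trans hM2 hp2M
    have hP1abs : |P1| ≤ 1 := abs_le.2 ⟨by linarith, hp11⟩
    -- ρ = 1 here
    have hρeq : ρ (p₁ x, p₂ x) = 1 := by
      apply hρ1
      simp only [Om3, Om0, mem_diff, mem_setOf_eq, not_lt]
      unfold p₁ p₂
      rw [← hP1e, ← hP2e]
      constructor
      · have h2 : |P2| = P2 := abs_of_pos (by linarith)
        rw [h2]
        calc (1 + 2*δ) * |P1| ≤ (1 + 2*δ) * 1 :=
              mul_le_mul_of_nonneg_left hP1abs (by linarith)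
          _ < 2 + 2*δ := by linarith
          _ ≤ M := hMδ
          _ ≤ P2 := hp2M
      · have h4 : (2:ℝ)^2 ≤ P2^2 := pow_le_pow_left₀ (by norm_num) hP2big 2
        have h5 := sq_nonneg P1
        linarith only [h4, h5]
    -- lower bound for pbar
    set PB : ℝ := pbar γ W W1 W2 x with hPBdef
    have hu1 : (1:ℝ) ≤ P2 - P1 := by linarith
    have hu0 : (0:ℝ) < P2 - P1 := by linarith
    have habs : ∀ (n : ℝ) (k : ℕ), |n / (P2 - P1)^k| ≤ |n| := by
      intro n k
      rw [abs_div, abs_of_pos (pow_pos hu0 k)]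
      exact div_le_self (abs_nonneg n) (one_le_pow₀ hu1)
    have ht1 : |W Δ / (P2 - P1)| ≤ C := by
      have h := habs (W Δ) 1
      rw [pow_one] at h
      exact h.trans (hCW Δ)
    have ht2 : |(γ * P1 * W1 Δ - W Δ ^ 2) / (P2 - P1)^3| ≤ γ*C + C^2 := by
      refine (habs _ 3).trans ((abs_sub _ _).trans ?_)
      have h1 : |γ * P1 * W1 Δ| ≤ γ * C := by
        rw [abs_mul, abs_mul, abs_of_pos hγ]
        calc γ * |P1| * |W1 Δ| ≤ γ * 1 * C :=
              mul_le_mul (mul_le_mul_of_nonneg_left hP1abs hγ.le) (hCW1 Δ) (abs_nonneg _)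
                (by positivity)
          _ = γ * C := by ring
      have h2 : |W Δ ^ 2| ≤ C^2 := by
        rw [abs_pow]
        exact pow_le_pow_left₀ (abs_nonneg _) (hCW Δ) 2
      linarith
    have ht3 : |γ ^ 2 * P1 * W2 Δ / (P2 - P1)^4| ≤ γ^2 * C := by
      refine (habs _ 4).trans ?_
      rw [abs_mul, abs_mul, abs_of_nonneg (by positivity : (0:ℝ) ≤ γ^2)]
      calc γ^2 * |P1| * |W2 Δ| ≤ γ^2 * 1 * C :=
            mul_le_mul (mul_le_mul_of_nonneg_left hP1abs (sq_nonneg γ)) (hCW2 Δ) (abs_nonneg _)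
              (by positivity)
        _ = γ^2 * C := by ring
    have ht4 : |3 * γ ^ 2 * P1 ^ 2 * W2 Δ / (P2 - P1)^5| ≤ 3 * γ^2 * C := by
      refine (habs _ 5).trans ?_
      rw [abs_mul, abs_mul, abs_mul]
      rw [(by norm_num : |(3:ℝ)| = 3), abs_of_nonneg (by positivity : (0:ℝ) ≤ γ^2)]
      have hP1sq : |P1^2| ≤ 1 := by
        rw [abs_pow]
        calc |P1|^2 ≤ 1^2 := pow_le_pow_left₀ (abs_nonneg _) hP1abs 2
          _ = 1 := one_pow 2
      calc 3 * γ^2 * |P1^2| * |W2 Δ| ≤ 3 * γ^2 * 1 * C :=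
            mul_le_mul (mul_le_mul_of_nonneg_left hP1sq (by positivity)) (hCW2 Δ) (abs_nonneg _)
              (by positivity)
        _ = 3 * γ^2 * C := by ring
    have hPBlb : P2 - K ≤ PB := by
      rw [hPBdef]
      unfold pbar p₁ p₂ q₁ q₂
      rw [← hP1e, ← hP2e, ← hΔe]
      have e1 := neg_abs_le (W Δ / (P2 - P1))
      have e2 := neg_abs_le ((γ * P1 * W1 Δ - W Δ ^ 2) / (P2 - P1)^3)
      have e3 := neg_abs_le (γ ^ 2 * P1 * W2 Δ / (P2 - P1)^4)
      have e4 := neg_abs_le (3 * γ ^ 2 * P1 ^ 2 * W2 Δ / (P2 - P1)^5)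
      rw [hKdef]
      linarith
    have hPK0 : 0 ≤ P2 - K := by linarith [hMK, hp2M]
    have hPBsq : (P2 - K)^2 ≤ PB^2 := pow_le_pow_left₀ hPK0 hPBlb 2
    -- the exponent is nonnegative
    have hWlb : -C ≤ W Δ := neg_le_of_abs_le (hCW Δ)
    have hHam : Ham W x / T ≤ b + b * P2^2 + C/T := by
      unfold Ham p₁ p₂ q₁ q₂
      rw [← hP1e, ← hP2e, ← hΔe]
      have heq : ((P1^2 + P2^2)/2 + W Δ) / T = b * P1^2 + b * P2^2 + W Δ / T := by
        rw [hbdef]; field_simp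
      rw [heq]
      have hP1sq1 : P1^2 ≤ 1 := by
        rw [← sq_abs]
        calc |P1|^2 ≤ 1^2 := pow_le_pow_left₀ (abs_nonneg _) hP1abs 2
          _ = 1 := one_pow 2
      have h1 : b * P1^2 ≤ b := by
        have := mul_le_mul_of_nonneg_left hP1sq1 hb0.le
        linarith only [this]
      have h2 : W Δ / T ≤ C / T := (div_le_div_iff_of_pos_right hT).2 (le_of_abs_le (hCW Δ))
      linarith
    have hP2Q : Q + 1 ≤ P2 := le_trans hMQ hp2M
    have h1' : (a-b)*(Q+1) ≤ (a-b)*P2 := mul_le_mul_of_nonneg_left hP2Q hab.le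
    have hexp : (a-b)*(Q+1) = (a-b)*Q + (a-b) := by ring
    have h1 : 2*a*K + b + C/T ≤ (a-b)*P2 := by linarith only [h1', hexp, hQmul, hab]
    have hkey : b + b*P2^2 + C/T ≤ a*(P2-K)^2 := by
      have f1 := mul_le_mul_of_nonneg_right h1 (by linarith only [hP2big] : (0:ℝ) ≤ P2)
      have f2 := mul_le_mul_of_nonneg_left (by linarith only [hP2big] : (1:ℝ) ≤ P2)
        (add_nonneg hb0.le hCT)
      have f3 := mul_nonneg ha0.le (sq_nonneg K)
      nlinarith only [f1, f2, f3]
    have haPB : a*(P2-K)^2 ≤ a*PB^2 := mul_le_mul_of_nonneg_left hPBsq ha0.le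
    have hE : 0 ≤ (1-ε) * (βp * PB^2 / 2) - Ham W x / T := by
      have heq2 : (1-ε) * (βp * PB^2 / 2) = a*PB^2 := by rw [hadef]; ring
      linarith only [hHam, hkey, haPB, heq2]
    -- conclude
    apply ENNReal.ofReal_le_ofReal
    have hFA : exp (βp * PB^2 / 2) ≤ Ftest γ βm βp W W1 W2 ρ x := by
      unfold Ftest
      rw [hρeq, one_mul, ← hPBdef]
      have := exp_pos (βm * Ham W x)
      linarith
    have hF1 : exp ((1-ε) * (βp * PB^2/2)) ≤ Ftest γ βm βp W W1 W2 ρ x ^ (1-ε) := by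
      have h := Real.rpow_le_rpow (exp_pos (βp * PB^2/2)).le hFA (by linarith : (0:ℝ) ≤ 1-ε)
      rwa [← Real.exp_mul, mul_comm] at h
    have hE1 : 1 ≤ exp ((1-ε) * (βp * PB^2/2)) * exp (-Ham W x / T) := by
      rw [← Real.exp_add]
      apply Real.one_le_exp
      rw [neg_div]
      linarith
    have hFpos : (0:ℝ) ≤ Ftest γ βm βp W W1 W2 ρ x ^ (1-ε) :=
      Real.rpow_nonneg (le_trans (exp_pos _).le hFA) _
    calc Z⁻¹ = Z⁻¹ * 1 := (mul_one _).symm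
      _ ≤ Z⁻¹ * (exp ((1-ε) * (βp * PB^2/2)) * exp (-Ham W x / T)) :=
          mul_le_mul_of_nonneg_left hE1 (inv_nonneg.2 hZpos.le)
      _ ≤ Z⁻¹ * (Ftest γ βm βp W W1 W2 ρ x ^ (1-ε) * exp (-Ham W x / T)) :=
          mul_le_mul_of_nonneg_left
            (mul_le_mul_of_nonneg_right hF1 (exp_pos _).le) (inv_nonneg.2 hZpos.le)
      _ = Ftest γ βm βp W W1 W2 ρ x ^ (1-ε) * (Z⁻¹ * exp (-Ham W x / T)) := by ring
  -- conclusion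
  rw [eq_top_iff]
  have h2 : ∫⁻ _x in S, ENNReal.ofReal Z⁻¹ = ⊤ := by
    rw [setLIntegral_const, hSvol,
      ENNReal.mul_top (ENNReal.ofReal_pos.2 (inv_pos.2 hZpos)).ne']
  have h3 : (⊤:ENNReal) ≤ ∫⁻ x in S, ENNReal.ofReal
      (Ftest γ βm βp W W1 W2 ρ x ^ (1 - ε) * (Z⁻¹ * exp (-Ham W x / T))) := by
    rw [← h2]
    apply lintegral_mono_ae
    rw [ae_restrict_iff' hSm]
    exact ae_of_all _ hptwise
  exact le_trans h3 (lintegral_mono_set hSsub)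
end

section
/- There exists a constant C₁ > 0 such that |p̄₂(x)² − p₂²| < C₁ for every x = (q₁, q₂, p₁, p₂) with |p₂| > (1+δ)|p₁| and p₁² + p₂² ≥ 1 (i.e., on the set Ω₂ ∪ Ω₃). -/
open Real MeasureTheory Set Filter

lemma bdd_of_periodic (f : ℝ → ℝ) (hf : Continuous f)
    (hp : Function.Periodic f (2 * π)) : ∃ M, 0 < M ∧ ∀ s, |f s| ≤ M := by
  obtain ⟨C, hC⟩ := (isCompact_Icc (a := (0:ℝ)) (b := 0 + 2*π)).exists_bound_of_continuousOn
    hf.continuousOn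
  refine ⟨max C 1, by positivity, fun s => ?_⟩
  have h := hp.image_Icc (by positivity) 0
  have : f s ∈ f '' Icc 0 (0 + 2*π) := by rw [h]; exact mem_range_self s
  obtain ⟨t, ht, hts⟩ := this
  rw [← hts]
  exact le_trans (hC t ht) (le_max_left _ _)

set_option maxHeartbeats 1000000 in
lemma stmt3_core (γ δ M : ℝ) (hγ : 0 < γ) (hδ : 0 < δ) (hM1 : 1 ≤ M)
    (a b w w1 w2 : ℝ) (hw : |w| ≤ M) (hw1 : |w1| ≤ M) (hw2 : |w2| ≤ M)
    (h1 : (1 + δ) * |a| < |b|) (h2 : 1 ≤ a ^ 2 + b ^ 2) :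
    |(b + w / (b - a) + (γ * a * w1 - w ^ 2) / (b - a) ^ 3
        + γ ^ 2 * a * w2 / (b - a) ^ 4
        + 3 * γ ^ 2 * a ^ 2 * w2 / (b - a) ^ 5) ^ 2 - b ^ 2|
      < 4 * (M/(δ/(1+δ)) + (2*γ*M + 4*M^2)/(δ/(1+δ))^3 + 4*γ^2*M/(δ/(1+δ))^4
          + 12*γ^2*M/(δ/(1+δ))^5) ^ 2
        + 2 * (M/(δ/(1+δ)) + (2*γ*M + 4*M^2)/(δ/(1+δ))^3 + 4*γ^2*M/(δ/(1+δ))^4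
          + 12*γ^2*M/(δ/(1+δ))^5) + 1 := by
  have hM0 : (0:ℝ) < M := by linarith
  have h1δ : (0:ℝ) < 1 + δ := by linarith
  set c : ℝ := δ / (1 + δ) with hcdef
  clear_value c
  have hc : 0 < c := by rw [hcdef]; positivity
  set K : ℝ := M/c + (2*γ*M + 4*M^2)/c^3 + 4*γ^2*M/c^4 + 12*γ^2*M/c^5 with hKdef
  clear_value K
  have hK : 0 < K := by rw [hKdef]; positivity
  set D : ℝ := b - a with hDdef
  clear_value D
  set B : ℝ := |b| with hBdef
  clear_value B
  have hB0' : 0 ≤ B := by rw [hBdef]; exact abs_nonneg b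
  have haB : |a| < B := lt_of_le_of_lt (le_mul_of_one_le_left (abs_nonneg a) (by linarith)) h1
  have hb2 : 1/2 ≤ b^2 := by
    have ha2 : a^2 ≤ b^2 := by
      have := sq_abs a; have := sq_abs b
      nlinarith [abs_nonneg a, abs_nonneg b]
    linarith
  have hB : 1/2 ≤ B := by
    rw [hBdef]
    nlinarith [sq_abs b, abs_nonneg b]
  have hB0 : 0 < B := by linarith
  have hDlow : c * B ≤ |D| := by
    have h3 := abs_sub_abs_le_abs_sub b a
    rw [← hBdef, ← hDdef] at h3
    have h4 : c * B ≤ B - |a| := by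
      rw [hcdef, div_mul_eq_mul_div, div_le_iff₀ h1δ]
      ring_nf
      ring_nf at h1
      linarith [h1]
    linarith
  have hcB : 0 < c * B := by positivity
  have hD0 : 0 < |D| := lt_of_lt_of_le hcB hDlow
  set t1 : ℝ := w / D with ht1def
  set t2 : ℝ := (γ * a * w1 - w ^ 2) / D ^ 3 with ht2def
  set t3 : ℝ := γ ^ 2 * a * w2 / D ^ 4 with ht3def
  set t4 : ℝ := 3 * γ ^ 2 * a ^ 2 * w2 / D ^ 5 with ht4def
  clear_value t1 t2 t3 t4
  have hT1 : |t1| ≤ M / (c*B) := by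
    rw [ht1def, abs_div]
    exact div_le_div₀ hM0.le hw hcB hDlow
  have hDpow : ∀ n : ℕ, (c*B)^n ≤ |D|^n := fun n => pow_le_pow_left₀ hcB.le hDlow n
  have hT2 : |t2| ≤ (γ*M*B + M^2) / (c*B)^3 := by
    rw [ht2def, abs_div, abs_pow]
    refine div_le_div₀ (by positivity) ?_ (by positivity) (hDpow 3)
    calc |γ * a * w1 - w ^ 2| ≤ |γ * a * w1| + |w ^ 2| := abs_sub _ _
      _ = γ * |a| * |w1| + |w|^2 := by
          rw [abs_mul, abs_mul, abs_of_pos hγ, abs_pow]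
      _ ≤ γ * B * M + M^2 := by gcongr <;> first | exact abs_nonneg a | exact haB.le | exact abs_nonneg w
      _ = γ*M*B + M^2 := by ring
  have hT3 : |t3| ≤ γ^2*B*M / (c*B)^4 := by
    rw [ht3def, abs_div, abs_pow]
    refine div_le_div₀ (by positivity) ?_ (by positivity) (hDpow 4)
    calc |γ ^ 2 * a * w2| = γ^2 * |a| * |w2| := by
          rw [abs_mul, abs_mul, abs_pow, abs_of_pos hγ]
      _ ≤ γ^2*B*M := by gcongr <;> first | exact abs_nonneg a | exact haB.le
  have hT4 : |t4| ≤ 3*γ^2*B^2*M / (c*B)^5 := by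
    rw [ht4def, abs_div, abs_pow]
    refine div_le_div₀ (by positivity) ?_ (by positivity) (hDpow 5)
    calc |3 * γ ^ 2 * a ^ 2 * w2| = 3 * γ^2 * |a|^2 * |w2| := by
          rw [abs_mul, abs_mul, abs_mul, abs_pow, abs_pow, abs_of_pos hγ]
          norm_num
      _ ≤ 3*γ^2*B^2*M := by gcongr <;> first | exact abs_nonneg a | exact haB.le
  set E : ℝ := t1 + t2 + t3 + t4 with hEdef
  clear_value E
  have hgoal : b + t1 + t2 + t3 + t4 = b + E := by rw [hEdef]; ring
  set S : ℝ := M/(c*B) + (γ*M*B + M^2)/(c*B)^3 + γ^2*B*M/(c*B)^4 + 3*γ^2*B^2*M/(c*B)^5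
    with hSdef
  clear_value S
  have hES : |E| ≤ S := by
    rw [hEdef]
    calc |t1 + t2 + t3 + t4| ≤ |t1 + t2 + t3| + |t4| := abs_add_le _ _
      _ ≤ |t1 + t2| + |t3| + |t4| := by gcongr; exact abs_add_le _ _
      _ ≤ |t1| + |t2| + |t3| + |t4| := by gcongr; exact abs_add_le _ _
      _ ≤ S := by
          rw [hSdef]
          exact add_le_add (add_le_add (add_le_add hT1 hT2) hT3) hT4
  have hS0 : 0 ≤ S := le_trans (abs_nonneg E) hES
  have hSB : S * B ≤ K := by
    rw [hSdef, hKdef]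
    have e1 : M/(c*B)*B = M/c := by field_simp
    have hB2sq : 1/4 ≤ B^2 := by nlinarith
    have hBB2 : B^2 ≤ 2*B^3 := by
      linarith [mul_nonneg (sq_nonneg B) (by linarith : (0:ℝ) ≤ 2*B - 1)]
    have hBB1 : B ≤ 4*B^3 := by
      linarith [mul_nonneg (mul_nonneg hB0'
        (by linarith : (0:ℝ) ≤ 2*B - 1)) (by linarith : (0:ℝ) ≤ 2*B + 1)]
    have hBB4 : B^2 ≤ 4*B^4 := by
      linarith [mul_nonneg (sq_nonneg B) (by linarith : (0:ℝ) ≤ 4*B^2 - 1)]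
    have hBB5 : B^3 ≤ 4*B^5 := by
      linarith [mul_nonneg (mul_nonneg (mul_nonneg hB0' hB0') hB0')
        (by linarith : (0:ℝ) ≤ 4*B^2 - 1)]
    have e2 : (γ*M*B + M^2)/(c*B)^3*B ≤ (2*γ*M + 4*M^2)/c^3 := by
      rw [mul_pow, div_mul_eq_mul_div, div_le_div_iff₀ (by positivity) (by positivity)]
      have h₁ : γ*M*c^3*B^2 ≤ γ*M*c^3*(2*B^3) :=
        mul_le_mul_of_nonneg_left hBB2 (by positivity)
      have h₂ : M^2*c^3*B ≤ M^2*c^3*(4*B^3) :=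
        mul_le_mul_of_nonneg_left hBB1 (by positivity)
      linarith [h₁, h₂]
    have e3 : γ^2*B*M/(c*B)^4*B ≤ 4*γ^2*M/c^4 := by
      rw [mul_pow, div_mul_eq_mul_div, div_le_div_iff₀ (by positivity) (by positivity)]
      have h₁ : γ^2*M*c^4*B^2 ≤ γ^2*M*c^4*(4*B^4) :=
        mul_le_mul_of_nonneg_left hBB4 (by positivity)
      linarith [h₁]
    have e4 : 3*γ^2*B^2*M/(c*B)^5*B ≤ 12*γ^2*M/c^5 := by
      rw [mul_pow, div_mul_eq_mul_div, div_le_div_iff₀ (by positivity) (by positivity)]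
      have h₁ : 3*γ^2*M*c^5*B^3 ≤ 3*γ^2*M*c^5*(4*B^5) :=
        mul_le_mul_of_nonneg_left hBB5 (by positivity)
      linarith [h₁]
    linarith [e1, e2, e3, e4]
  have hEB : |E| * B ≤ K := le_trans (mul_le_mul_of_nonneg_right hES hB0') hSB
  have hE2 : |E| ≤ 2*K := by
    have := mul_le_mul_of_nonneg_left hB (abs_nonneg E)
    nlinarith [hEB]
  rw [hgoal]
  have hsq : (b + E) ^ 2 - b ^ 2 = E * (E + 2*b) := by ring
  rw [hsq, abs_mul]
  have h6 : |E + 2*b| ≤ |E| + 2*B := by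
    calc |E + 2*b| ≤ |E| + |2*b| := abs_add_le _ _
      _ = |E| + 2*B := by rw [abs_mul, abs_two, hBdef]
  calc |E| * |E + 2*b| ≤ |E| * (|E| + 2*B) :=
        mul_le_mul_of_nonneg_left h6 (abs_nonneg E)
    _ = |E| * |E| + 2*(|E| * B) := by ring
    _ ≤ 2*K*(2*K) + 2*K := by
        have h7 : |E| * |E| ≤ 2*K*(2*K) :=
          mul_le_mul hE2 hE2 (abs_nonneg E) (by positivity)
        linarith [hEB]
    _ < 4*K^2 + 2*K + 1 := by linarith

set_option maxHeartbeats 1000000 in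
theorem stmt_3
    (γ δ : ℝ) (hγ : 0 < γ) (hδ : 0 < δ)
    (W W1 W2 : ℝ → ℝ)
    (hW : ContDiff ℝ (⊤ : ℕ∞) W) (hWper : Function.Periodic W (2 * π))
    (hWint : ∫ s in (0 : ℝ)..(2 * π), W s = 0)
    (hW1 : ContDiff ℝ (⊤ : ℕ∞) W1) (hW1per : Function.Periodic W1 (2 * π))
    (hW1d : deriv W1 = W) (hW1int : ∫ s in (0 : ℝ)..(2 * π), W1 s = 0)
    (hW2 : ContDiff ℝ (⊤ : ℕ∞) W2) (hW2per : Function.Periodic W2 (2 * π))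
    (hW2d : deriv W2 = W1) :
    ∃ C₁ > (0 : ℝ), ∀ x : Pt,
      (1 + δ) * |p₁ x| < |p₂ x| → 1 ≤ p₁ x ^ 2 + p₂ x ^ 2 →
        |pbar γ W W1 W2 x ^ 2 - p₂ x ^ 2| < C₁ := by
  obtain ⟨Ma, hMa, hWb⟩ := bdd_of_periodic W hW.continuous hWper
  obtain ⟨Mb, hMb, hW1b⟩ := bdd_of_periodic W1 hW1.continuous hW1per
  obtain ⟨Mc, hMc, hW2b⟩ := bdd_of_periodic W2 hW2.continuous hW2per
  set M : ℝ := max 1 (max Ma (max Mb Mc)) with hMdef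
  have hM1 : (1:ℝ) ≤ M := le_max_left _ _
  have hWM : ∀ s, |W s| ≤ M := fun s =>
    le_trans (hWb s) (le_trans (le_max_left _ _) (le_max_right _ _))
  have hW1M : ∀ s, |W1 s| ≤ M := fun s =>
    le_trans (hW1b s) (le_trans (le_trans (le_max_left _ _) (le_max_right _ _)) (le_max_right _ _))
  have hW2M : ∀ s, |W2 s| ≤ M := fun s =>
    le_trans (hW2b s) (le_trans (le_trans (le_max_right _ _) (le_max_right _ _)) (le_max_right _ _))
  clear_value M
  have hM0 : (0:ℝ) < M := by linarith
  have h1δ : (0:ℝ) < 1 + δ := by linarith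
  have hc : (0:ℝ) < δ/(1+δ) := by positivity
  refine ⟨4 * (M/(δ/(1+δ)) + (2*γ*M + 4*M^2)/(δ/(1+δ))^3 + 4*γ^2*M/(δ/(1+δ))^4
          + 12*γ^2*M/(δ/(1+δ))^5) ^ 2
        + 2 * (M/(δ/(1+δ)) + (2*γ*M + 4*M^2)/(δ/(1+δ))^3 + 4*γ^2*M/(δ/(1+δ))^4
          + 12*γ^2*M/(δ/(1+δ))^5) + 1, by positivity, fun x h1 h2 => ?_⟩
  have := stmt3_core γ δ M hγ hδ hM1 (p₁ x) (p₂ x)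
    (W (q₂ x - q₁ x)) (W1 (q₂ x - q₁ x)) (W2 (q₂ x - q₁ x))
    (hWM _) (hW1M _) (hW2M _) h1 h2
  simpa only [pbar] using this
end

section
/- Let β₊ > 0. There exists a constant C₂ > 0 such that (L exp(β₊ p̄₂²/2))(x) ≤ C₂ · p₂^{−2} · exp(β₊ p̄₂(x)²/2) for every x = (q₁, q₂, p₁, p₂) with |p₂| > (1+δ)|p₁| and p₁² + p₂² ≥ 1 (i.e., on the set Ω₂ ∪ Ω₃). -/
open Real MeasureTheory Set Filter

noncomputable section AuxDefs

/-- `p̄₂ / p₂` expressed in the rescaled variables `r = p₁/p₂`, `v = 1/p₂`,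
`e = (1-r)⁻¹`, with `a = W Δ`, `b = W¹ Δ`, `c = W² Δ`. -/
def Xa (γ a b c r v e : ℝ) : ℝ :=
  1 + a * v ^ 2 * e + (γ * r * b * v ^ 3 - a ^ 2 * v ^ 4) * e ^ 3
    + γ ^ 2 * r * c * v ^ 4 * e ^ 4 + 3 * γ ^ 2 * r ^ 2 * c * v ^ 4 * e ^ 5

/-- `(L p̄₂) · p₂³` in the rescaled variables. -/
def La (γ T a b c w r v e : ℝ) : ℝ :=
  γ * (b * w + 2 * T * a) * e ^ 3
    + (w * (6 * γ * r * b - 6 * a ^ 2 * v + γ ^ 2 * c * v) + 3 * γ * a ^ 2 * r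
        - γ ^ 3 * r * c + 6 * γ ^ 2 * T * b * v) * e ^ 4
    + (14 * γ ^ 2 * r * c * w * v - 10 * γ ^ 3 * r ^ 2 * c
        + γ * T * (12 * γ * r * b * v - 12 * a ^ 2 * v ^ 2 + 14 * γ ^ 2 * c * v ^ 2)) * e ^ 5
    + (30 * γ ^ 2 * r ^ 2 * c * w * v - 15 * γ ^ 3 * r ^ 3 * c
        + 80 * γ ^ 3 * T * r * c * v ^ 2) * e ^ 6
    + 90 * γ ^ 3 * T * r ^ 2 * c * v ^ 2 * e ^ 7

/-- `(∂_{p₁} p̄₂) · p₂²` in the rescaled variables. -/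
def Da (γ a b c r v e : ℝ) : ℝ :=
  a * e ^ 2 + γ * b * v * e ^ 3 + (3 * γ * r * b * v - 3 * a ^ 2 * v ^ 2 + γ ^ 2 * c * v ^ 2) * e ^ 4
    + 10 * γ ^ 2 * r * c * v ^ 2 * e ^ 5 + 15 * γ ^ 2 * r ^ 2 * c * v ^ 2 * e ^ 6

/-- `p₂² · e^{-β₊p̄₂²/2} L e^{β₊p̄₂²/2}` in the rescaled variables. -/
def Gaux (γ T βp a b c w r v e : ℝ) : ℝ :=
  βp * Xa γ a b c r v e * La γ T a b c w r v e
    + γ * T * βp * Da γ a b c r v e ^ 2 * v ^ 2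
    + γ * T * βp ^ 2 * Xa γ a b c r v e ^ 2 * Da γ a b c r v e ^ 2

end AuxDefs

lemma periodic_deriv {f : ℝ → ℝ} {c : ℝ} (h : Function.Periodic f c) :
    Function.Periodic (deriv f) c := by
  intro x
  have h2 : deriv (fun y => f (y + c)) x = deriv f (x + c) := deriv_comp_add_const f c x
  have h3 : (fun y => f (y + c)) = f := funext h
  rw [← h2, h3]

lemma expsq_hasDerivAt {P : ℝ → ℝ} {D βp : ℝ} {s : ℝ} (hP : HasDerivAt P D s) :
    HasDerivAt (fun t => Real.exp (βp * P t ^ 2 / 2))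
      (βp * P s * D * Real.exp (βp * P s ^ 2 / 2)) s := by
  have h := (((hP.fun_pow 2).const_mul βp).div_const 2).exp
  convert h using 1
  push_cast
  ring

lemma iter_two (f : ℝ → ℝ) : iteratedDeriv 2 f = deriv (deriv f) := by
  have h : iteratedDeriv (1 + 1) f = deriv (iteratedDeriv 1 f) := iteratedDeriv_succ
  simpa [iteratedDeriv_one] using h

lemma iter2_expsq {P D : ℝ → ℝ} {pa βp d2 : ℝ} {U : Set ℝ} (hU : IsOpen U) (hpa : pa ∈ U)
    (hP : ∀ s ∈ U, HasDerivAt P (D s) s) (hD : HasDerivAt D d2 pa) :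
    iteratedDeriv 2 (fun t => Real.exp (βp * P t ^ 2 / 2)) pa
      = (βp * D pa * D pa + βp * P pa * d2) * Real.exp (βp * P pa ^ 2 / 2)
        + βp * P pa * D pa * (βp * P pa * D pa * Real.exp (βp * P pa ^ 2 / 2)) := by
  have hev : deriv (fun t => Real.exp (βp * P t ^ 2 / 2))
      =ᶠ[nhds pa] fun s => βp * P s * D s * Real.exp (βp * P s ^ 2 / 2) := by
    filter_upwards [hU.mem_nhds hpa] with s hs
    exact (expsq_hasDerivAt (hP s hs)).deriv
  rw [iter_two, hev.deriv_eq]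
  exact ((((hP pa hpa).const_mul βp).mul hD).mul (expsq_hasDerivAt (hP pa hpa))).deriv


set_option maxHeartbeats 2000000 in
lemma Lgen_eq_G (γ T βp : ℝ) (W W1 W2 : ℝ → ℝ)
    (hW : ContDiff ℝ (⊤ : ℕ∞) W) (hW1 : ContDiff ℝ (⊤ : ℕ∞) W1) (hW2 : ContDiff ℝ (⊤ : ℕ∞) W2)
    (hW1d : deriv W1 = W) (hW2d : deriv W2 = W1)
    (qa qb pa pb : ℝ) (hpb : pb ≠ 0) (hu : pb - pa ≠ 0) (he : 1 - pa / pb ≠ 0) :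
    Lgen γ T W (fun y => Real.exp (βp * pbar γ W W1 W2 y ^ 2 / 2)) (qa, qb, pa, pb)
      = Gaux γ T βp (W (qb - qa)) (W1 (qb - qa)) (W2 (qb - qa)) (deriv W (qb - qa))
          (pa / pb) (1 / pb) ((1 - pa / pb)⁻¹) * (1 / pb) ^ 2
          * Real.exp (βp * pbar γ W W1 W2 (qa, qb, pa, pb) ^ 2 / 2) := by
  have hWd : ∀ t, HasDerivAt W (deriv W t) t := fun t => (hW.differentiable (by simp) t).hasDerivAt
  have hW1dAt : ∀ t, HasDerivAt W1 (W t) t := fun t =>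
    hW1d ▸ (hW1.differentiable (by simp) t).hasDerivAt
  have hW2dAt : ∀ t, HasDerivAt W2 (W1 t) t := fun t =>
    hW2d ▸ (hW2.differentiable (by simp) t).hasDerivAt
  have h0q : HasDerivAt (fun s : ℝ => qb - s) (-1) qa := by
    simpa using (hasDerivAt_const qa qb).fun_sub (hasDerivAt_id qa)
  have haq : HasDerivAt (fun s => W (qb - s)) (-deriv W (qb - qa)) qa := by
    simpa [Function.comp_def] using (hWd (qb - qa)).comp (x := qa) h0q
  have hbq : HasDerivAt (fun s => W1 (qb - s)) (-W (qb - qa)) qa := by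
    simpa [Function.comp_def] using (hW1dAt (qb - qa)).comp (x := qa) h0q
  have hcq : HasDerivAt (fun s => W2 (qb - s)) (-W1 (qb - qa)) qa := by
    simpa [Function.comp_def] using (hW2dAt (qb - qa)).comp (x := qa) h0q
  have hP1 : HasDerivAt (fun s => pbar γ W W1 W2 (s, qb, pa, pb)) (-((deriv W (qb - qa) * (pb - pa) ^ 6 + (γ * pa * W (qb - qa) - 2 * W (qb - qa) * deriv W (qb - qa)) * (pb - pa) ^ 4 + γ ^ 2 * pa * W1 (qb - qa) * (pb - pa) ^ 3 + 3 * γ ^ 2 * pa ^ 2 * W1 (qb - qa) * (pb - pa) ^ 2) / (pb - pa) ^ 7)) qa := by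
    have H := ((((hasDerivAt_const qa pb).fun_add (haq.div_const (pb - pa))).fun_add
        (((hbq.const_mul (γ * pa)).fun_sub (haq.fun_pow 2)).div_const ((pb - pa) ^ 3))).fun_add
        ((hcq.const_mul (γ ^ 2 * pa)).div_const ((pb - pa) ^ 4))).fun_add
        ((hcq.const_mul (3 * γ ^ 2 * pa ^ 2)).div_const ((pb - pa) ^ 5))
    dsimp only [pbar, q₁, q₂, p₁, p₂]
    refine H.congr_deriv ?_
    field_simp
    ring
  have h0q2 : HasDerivAt (fun s : ℝ => s - qa) 1 qb := (hasDerivAt_id qb).sub_const qa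
  have haq2 : HasDerivAt (fun s => W (s - qa)) (deriv W (qb - qa)) qb := by
    simpa [Function.comp_def] using (hWd (qb - qa)).comp (x := qb) h0q2
  have hbq2 : HasDerivAt (fun s => W1 (s - qa)) (W (qb - qa)) qb := by
    simpa [Function.comp_def] using (hW1dAt (qb - qa)).comp (x := qb) h0q2
  have hcq2 : HasDerivAt (fun s => W2 (s - qa)) (W1 (qb - qa)) qb := by
    simpa [Function.comp_def] using (hW2dAt (qb - qa)).comp (x := qb) h0q2
  have hP2 : HasDerivAt (fun s => pbar γ W W1 W2 (qa, s, pa, pb)) ((deriv W (qb - qa) * (pb - pa) ^ 6 + (γ * pa * W (qb - qa) - 2 * W (qb - qa) * deriv W (qb - qa)) * (pb - pa) ^ 4 + γ ^ 2 * pa * W1 (qb - qa) * (pb - pa) ^ 3 + 3 * γ ^ 2 * pa ^ 2 * W1 (qb - qa) * (pb - pa) ^ 2) / (pb - pa) ^ 7) qb := by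
    have H := ((((hasDerivAt_const qb pb).fun_add (haq2.div_const (pb - pa))).fun_add
        (((hbq2.const_mul (γ * pa)).fun_sub (haq2.fun_pow 2)).div_const ((pb - pa) ^ 3))).fun_add
        ((hcq2.const_mul (γ ^ 2 * pa)).div_const ((pb - pa) ^ 4))).fun_add
        ((hcq2.const_mul (3 * γ ^ 2 * pa ^ 2)).div_const ((pb - pa) ^ 5))
    dsimp only [pbar, q₁, q₂, p₁, p₂]
    refine H.congr_deriv ?_
    field_simp
    ring
  have hopen : IsOpen {t : ℝ | pb - t ≠ 0} :=
    isOpen_ne.preimage (continuous_const.sub continuous_id)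
  have hP3 : ∀ s ∈ {t : ℝ | pb - t ≠ 0}, HasDerivAt (fun t => pbar γ W W1 W2 (qa, qb, t, pb))
      ((fun s => (W (qb - qa) * (pb - s) ^ 5 + γ * W1 (qb - qa) * (pb - s) ^ 4 + (3 * γ * s * W1 (qb - qa) - 3 * W (qb - qa) ^ 2 + γ ^ 2 * W2 (qb - qa)) * (pb - s) ^ 3 + 10 * γ ^ 2 * s * W2 (qb - qa) * (pb - s) ^ 2 + 15 * γ ^ 2 * s ^ 2 * W2 (qb - qa) * (pb - s)) / (pb - s) ^ 7) s) s := by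
    intro s hs
    have hs' : pb - s ≠ 0 := hs
    have h0 : HasDerivAt (fun t : ℝ => pb - t) (-1) s := by
      simpa using (hasDerivAt_const s pb).fun_sub (hasDerivAt_id s)
    have H := ((((hasDerivAt_const s pb).fun_add
        ((hasDerivAt_const s (W (qb - qa))).fun_div h0 hs')).fun_add
        (((((hasDerivAt_id s).const_mul γ).mul_const (W1 (qb - qa))).sub_const
            (W (qb - qa) ^ 2)).fun_div (h0.fun_pow 3) (pow_ne_zero 3 hs'))).fun_add
        ((((hasDerivAt_id s).const_mul (γ ^ 2)).mul_const (W2 (qb - qa))).fun_div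
          (h0.fun_pow 4) (pow_ne_zero 4 hs'))).fun_add
        ((((hasDerivAt_pow 2 s).const_mul (3 * γ ^ 2)).mul_const (W2 (qb - qa))).fun_div
          (h0.fun_pow 5) (pow_ne_zero 5 hs'))
    dsimp only [pbar, q₁, q₂, p₁, p₂]
    refine H.congr_deriv ?_
    dsimp only [id]
    field_simp
    ring
  have hD3 : HasDerivAt (fun s => (W (qb - qa) * (pb - s) ^ 5 + γ * W1 (qb - qa) * (pb - s) ^ 4 + (3 * γ * s * W1 (qb - qa) - 3 * W (qb - qa) ^ 2 + γ ^ 2 * W2 (qb - qa)) * (pb - s) ^ 3 + 10 * γ ^ 2 * s * W2 (qb - qa) * (pb - s) ^ 2 + 15 * γ ^ 2 * s ^ 2 * W2 (qb - qa) * (pb - s)) / (pb - s) ^ 7) (((2 * W (qb - qa) * ((pb - pa)) ^ 4 + 6 * γ * W1 (qb - qa) * ((pb - pa)) ^ 3 + (12 * γ * pa * W1 (qb - qa) - 12 * W (qb - qa) ^ 2 + 14 * γ ^ 2 * W2 (qb - qa)) * ((pb - pa)) ^ 2 + 80 * γ ^ 2 * pa * W2 (qb - qa) * ((pb - pa)) +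 90 * γ ^ 2 * pa ^ 2 * W2 (qb - qa)) / (pb - pa) ^ 7)) pa := by
    have h0 : HasDerivAt (fun t : ℝ => pb - t) (-1) pa := by
      simpa using (hasDerivAt_const pa pb).fun_sub (hasDerivAt_id pa)
    have H := (((((h0.fun_pow 5).const_mul (W (qb - qa))).fun_add
        ((h0.fun_pow 4).const_mul (γ * W1 (qb - qa)))).fun_add
        ((((((hasDerivAt_id pa).const_mul (3 * γ)).mul_const (W1 (qb - qa))).sub_const
            (3 * W (qb - qa) ^ 2)).add_const (γ ^ 2 * W2 (qb - qa))).fun_mul (h0.fun_pow 3))).fun_add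
        ((((hasDerivAt_id pa).const_mul (10 * γ ^ 2)).mul_const (W2 (qb - qa))).fun_mul (h0.fun_pow 2))).fun_add
        ((((hasDerivAt_pow 2 pa).const_mul (15 * γ ^ 2)).mul_const (W2 (qb - qa))).fun_mul h0)
    have H2 := H.fun_div (h0.fun_pow 7) (pow_ne_zero 7 hu)
    refine H2.congr_deriv ?_
    dsimp only [id]
    field_simp
    ring
  have h0p2 : HasDerivAt (fun s : ℝ => s - pa) 1 pb := (hasDerivAt_id pb).sub_const pa
  have hP4 : HasDerivAt (fun s => pbar γ W W1 W2 (qa, qb, pa, s)) ((((pb - pa)) ^ 7 - W (qb - qa) * ((pb - pa)) ^ 5 - 3 * (γ * pa * W1 (qb - qa) - W (qb - qa) ^ 2) * ((pb - pa)) ^ 3 - 4 * γ ^ 2 * pa * W2 (qb - qa) * ((pb - pa)) ^ 2 - 15 * γ ^ 2 * pa ^ 2 * W2 (qb - qa) * ((pb - pa))) / (pb - pa) ^ 7) pb := by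
    have H := ((((hasDerivAt_id pb).fun_add
        ((hasDerivAt_const pb (W (qb - qa))).fun_div h0p2 hu)).fun_add
        ((hasDerivAt_const pb (γ * pa * W1 (qb - qa) - W (qb - qa) ^ 2)).fun_div
          (h0p2.fun_pow 3) (pow_ne_zero 3 hu))).fun_add
        ((hasDerivAt_const pb (γ ^ 2 * pa * W2 (qb - qa))).fun_div
          (h0p2.fun_pow 4) (pow_ne_zero 4 hu))).fun_add
        ((hasDerivAt_const pb (3 * γ ^ 2 * pa ^ 2 * W2 (qb - qa))).fun_div
          (h0p2.fun_pow 5) (pow_ne_zero 5 hu))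
    dsimp only [pbar, q₁, q₂, p₁, p₂]
    refine H.congr_deriv ?_
    field_simp
    ring
  have h2nd := iter2_expsq (βp := βp) hopen (show pa ∈ {t : ℝ | pb - t ≠ 0} from hu) hP3 hD3
  simp only [Lgen, q₁, q₂, p₁, p₂]
  rw [(expsq_hasDerivAt hP1).deriv, (expsq_hasDerivAt hP2).deriv,
    (expsq_hasDerivAt (hP3 pa hu)).deriv, (expsq_hasDerivAt hP4).deriv, h2nd]
  have hee : (1 - pa / pb)⁻¹ = pb / (pb - pa) := by
    rw [one_sub_div hpb, inv_div]
  rw [hee]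
  have hXa : pbar γ W W1 W2 (qa, qb, pa, pb) = Xa γ (W (qb - qa)) (W1 (qb - qa)) (W2 (qb - qa)) (pa / pb) (1 / pb) (pb / (pb - pa)) * pb := by
    simp only [pbar, q₁, q₂, p₁, p₂, Xa]
    field_simp
  rw [hXa]
  have hDa : ((W (qb - qa) * (pb - pa) ^ 5 + γ * W1 (qb - qa) * (pb - pa) ^ 4 + (3 * γ * pa * W1 (qb - qa) - 3 * W (qb - qa) ^ 2 + γ ^ 2 * W2 (qb - qa)) * (pb - pa) ^ 3 + 10 * γ ^ 2 * pa * W2 (qb - qa) * (pb - pa) ^ 2 + 15 * γ ^ 2 * pa ^ 2 * W2 (qb - qa) * (pb - pa)) / (pb - pa) ^ 7) = Da γ (W (qb - qa)) (W1 (qb - qa)) (W2 (qb - qa)) (pa / pb) (1 / pb) (pb / (pb - pa)) * (1 / pb) ^ 2 := by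
    simp only [Da]
    field_simp
  have hscal : pa * (-((deriv W (qb - qa) * (pb - pa) ^ 6 + (γ * pa * W (qb - qa) - 2 * W (qb - qa) * deriv W (qb - qa)) * (pb - pa) ^ 4 + γ ^ 2 * pa * W1 (qb - qa) * (pb - pa) ^ 3 + 3 * γ ^ 2 * pa ^ 2 * W1 (qb - qa) * (pb - pa) ^ 2) / (pb - pa) ^ 7)) + pb * ((deriv W (qb - qa) * (pb - pa) ^ 6 + (γ * pa * W (qb - qa) - 2 * W (qb - qa) * deriv W (qb - qa)) * (pb - pa) ^ 4 + γ ^ 2 * pa * W1 (qb - qa) * (pb - pa) ^ 3 + 3 * γ ^ 2 * pa ^ 2 * W1 (qb - qa) * (pb - pa) ^ 2) / (pb - pa) ^ 7)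
      + deriv W (qb - qa) * (((W (qb - qa) * (pb - pa) ^ 5 + γ * W1 (qb - qa) * (pb - pa) ^ 4 + (3 * γ * pa * W1 (qb - qa) - 3 * W (qb - qa) ^ 2 + γ ^ 2 * W2 (qb - qa)) * (pb - pa) ^ 3 + 10 * γ ^ 2 * pa * W2 (qb - qa) * (pb - pa) ^ 2 + 15 * γ ^ 2 * pa ^ 2 * W2 (qb - qa) * (pb - pa)) / (pb - pa) ^ 7) - ((((pb - pa)) ^ 7 - W (qb - qa) * ((pb - pa)) ^ 5 - 3 * (γ * pa * W1 (qb - qa) - W (qb - qa) ^ 2) * ((pb - pa)) ^ 3 - 4 * γ ^ 2 * pa * W2 (qb - qa) * ((pb - pa)) ^ 2 - 15 * γ ^ 2 * pa ^ 2 * W2 (qb - qa) * ((pb - pa))) / (pb - pa) ^ 7))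
      - γ * pa * ((W (qb - qa) * (pb - pa) ^ 5 + γ * W1 (qb - qa) * (pb - pa) ^ 4 + (3 * γ * pa * W1 (qb - qa) - 3 * W (qb - qa) ^ 2 + γ ^ 2 * W2 (qb - qa)) * (pb - pa) ^ 3 + 10 * γ ^ 2 * pa * W2 (qb - qa) * (pb - pa) ^ 2 + 15 * γ ^ 2 * pa ^ 2 * W2 (qb - qa) * (pb - pa)) / (pb - pa) ^ 7)
      + γ * T * ((2 * W (qb - qa) * ((pb - pa)) ^ 4 + 6 * γ * W1 (qb - qa) * ((pb - pa)) ^ 3 + (12 * γ * pa * W1 (qb - qa) - 12 * W (qb - qa) ^ 2 + 14 * γ ^ 2 * W2 (qb - qa)) * ((pb - pa)) ^ 2 + 80 * γ ^ 2 * pa * W2 (qb - qa) * ((pb - pa)) + 90 * γ ^ 2 * pa ^ 2 * W2 (qb - qa)) / (pb - pa) ^ 7)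
      = La γ T (W (qb - qa)) (W1 (qb - qa)) (W2 (qb - qa)) (deriv W (qb - qa)) (pa / pb) (1 / pb) (pb / (pb - pa)) * (1 / pb) ^ 3 := by
    have hs1 : (γ * (W1 (qb - qa) * deriv W (qb - qa) + 2 * T * W (qb - qa)) * (pb - pa) ^ 4 + (deriv W (qb - qa) * (6 * γ * pa * W1 (qb - qa) - 6 * W (qb - qa) ^ 2 + γ ^ 2 * W2 (qb - qa)) + 3 * γ * W (qb - qa) ^ 2 * pa - γ ^ 3 * pa * W2 (qb - qa) + 6 * γ ^ 2 * T * W1 (qb - qa)) * (pb - pa) ^ 3 + (14 * γ ^ 2 * pa * W2 (qb - qa) * deriv W (qb - qa) - 10 * γ ^ 3 * pa ^ 2 * W2 (qb - qa) + γ * T * (12 * γ * pa * W1 (qb - qa) - 12 * W (qb - qa) ^ 2 + 14 * γ ^ 2 * W2 (qb - qa))) * (pb - pa) ^ 2 + (30 * γ ^ 2 * pa ^ 2 * W2 (qb - qa) * deriv W (qb - qa) - 15 * γ ^ 3 * pa ^ 3 * W2 (qb - qa) + 80 * γ ^ 3 * T * pa * W2 (qb - qa)) * (pb - pa) + 90 *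 γ ^ 3 * T * pa ^ 2 * W2 (qb - qa)) / (pb - pa) ^ 7
        = La γ T (W (qb - qa)) (W1 (qb - qa)) (W2 (qb - qa)) (deriv W (qb - qa)) (pa / pb) (1 / pb) (pb / (pb - pa)) * (1 / pb) ^ 3 := by
      simp only [La]
      field_simp
    rw [← hs1]
    ring
  have hv : pb * (1 / pb) = 1 := by field_simp
  simp only [Gaux]
  linear_combination (βp * (Xa γ (W (qb - qa)) (W1 (qb - qa)) (W2 (qb - qa)) (pa / pb) (1 / pb) (pb / (pb - pa))) * pb * (Real.exp (βp * (Xa γ (W (qb - qa)) (W1 (qb - qa)) (W2 (qb - qa)) (pa / pb) (1 / pb) (pb / (pb - pa)) * pb) ^ 2 / 2))) * hscal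
    + (βp * (Xa γ (W (qb - qa)) (W1 (qb - qa)) (W2 (qb - qa)) (pa / pb) (1 / pb) (pb / (pb - pa))) * (Real.exp (βp * (Xa γ (W (qb - qa)) (W1 (qb - qa)) (W2 (qb - qa)) (pa / pb) (1 / pb) (pb / (pb - pa)) * pb) ^ 2 / 2)) * (La γ T (W (qb - qa)) (W1 (qb - qa)) (W2 (qb - qa)) (deriv W (qb - qa)) (pa / pb) (1 / pb) (pb / (pb - pa))) * (1 / pb) ^ 2
       + γ * T * βp ^ 2 * (Xa γ (W (qb - qa)) (W1 (qb - qa)) (W2 (qb - qa)) (pa / pb) (1 / pb) (pb / (pb - pa))) ^ 2 * (Real.exp (βp * (Xa γ (W (qb - qa)) (W1 (qb - qa)) (W2 (qb - qa)) (pa / pb) (1 / pb) (pb / (pb - pa)) * pb) ^ 2 / 2)) * (Da γ (W (qb - qa)) (W1 (qb - qa)) (W2 (qb - qa)) (pa / pb) (1 / pb) (pb / (pb - pa))) ^ 2 * (1 / pb) ^ 2 * (pb * (1 / pb) + 1)) * hv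
    + (γ * T * βp * (Real.exp (βp * (Xa γ (W (qb - qa)) (W1 (qb - qa)) (W2 (qb - qa)) (pa / pb) (1 / pb) (pb / (pb - pa)) * pb) ^ 2 / 2)) * (((W (qb - qa) * (pb - pa) ^ 5 + γ * W1 (qb - qa) * (pb - pa) ^ 4 + (3 * γ * pa * W1 (qb - qa) - 3 * W (qb - qa) ^ 2 + γ ^ 2 * W2 (qb - qa)) * (pb - pa) ^ 3 + 10 * γ ^ 2 * pa * W2 (qb - qa) * (pb - pa) ^ 2 + 15 * γ ^ 2 * pa ^ 2 * W2 (qb - qa) * (pb - pa)) / (pb - pa) ^ 7) + Da γ (W (qb - qa)) (W1 (qb - qa)) (W2 (qb - qa)) (pa / pb) (1 / pb) (pb / (pb - pa)) * (1 / pb) ^ 2)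
       + γ * T * βp ^ 2 * (Xa γ (W (qb - qa)) (W1 (qb - qa)) (W2 (qb - qa)) (pa / pb) (1 / pb) (pb / (pb - pa))) ^ 2 * pb ^ 2 * (Real.exp (βp * (Xa γ (W (qb - qa)) (W1 (qb - qa)) (W2 (qb - qa)) (pa / pb) (1 / pb) (pb / (pb - pa)) * pb) ^ 2 / 2)) * (((W (qb - qa) * (pb - pa) ^ 5 + γ * W1 (qb - qa) * (pb - pa) ^ 4 + (3 * γ * pa * W1 (qb - qa) - 3 * W (qb - qa) ^ 2 + γ ^ 2 * W2 (qb - qa)) * (pb - pa) ^ 3 + 10 * γ ^ 2 * pa * W2 (qb - qa) * (pb - pa) ^ 2 + 15 * γ ^ 2 * pa ^ 2 * W2 (qb - qa) * (pb - pa)) / (pb - pa) ^ 7) + Da γ (W (qb - qa)) (W1 (qb - qa)) (W2 (qb - qa)) (pa / pb) (1 / pb) (pb / (pb - pa)) * (1 / pb) ^ 2)) * hDa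

theorem stmt_4
    (γ T δ βp : ℝ) (hγ : 0 < γ) (hT : 0 < T) (hδ : 0 < δ) (hβp : 0 < βp)
    (W W1 W2 : ℝ → ℝ)
    (hW : ContDiff ℝ (⊤ : ℕ∞) W) (hWper : Function.Periodic W (2 * π))
    (hWint : ∫ s in (0 : ℝ)..(2 * π), W s = 0)
    (hW1 : ContDiff ℝ (⊤ : ℕ∞) W1) (hW1per : Function.Periodic W1 (2 * π))
    (hW1d : deriv W1 = W) (hW1int : ∫ s in (0 : ℝ)..(2 * π), W1 s = 0)
    (hW2 : ContDiff ℝ (⊤ : ℕ∞) W2) (hW2per : Function.Periodic W2 (2 * π))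
    (hW2d : deriv W2 = W1) :
    ∃ C₂ > (0 : ℝ), ∀ x : Pt,
      (1 + δ) * |p₁ x| < |p₂ x| → 1 ≤ p₁ x ^ 2 + p₂ x ^ 2 →
        Lgen γ T W (fun y => exp (βp * pbar γ W W1 W2 y ^ 2 / 2)) x
          ≤ C₂ * (p₂ x) ^ (-2 : ℤ) * exp (βp * pbar γ W W1 W2 x ^ 2 / 2) := by
  -- continuity of the rescaled generator expression
  have hcW : Continuous W := hW.continuous
  have hcW1 : Continuous W1 := hW1.continuous
  have hcW2 : Continuous W2 := hW2.continuous
  have hcw : Continuous (deriv W) := hW.continuous_deriv (by simp)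
  have hGc : Continuous (fun z : ℝ × ℝ × ℝ × ℝ =>
      Gaux γ T βp (W z.1) (W1 z.1) (W2 z.1) (deriv W z.1) z.2.1 z.2.2.1 z.2.2.2) := by
    unfold Gaux Xa La Da
    fun_prop
  obtain ⟨Cb, hCb⟩ :=
    (isCompact_Icc.prod (isCompact_Icc.prod (isCompact_Icc.prod isCompact_Icc)) :
      IsCompact (Set.Icc (0:ℝ) (2*π) ×ˢ Set.Icc (-1:ℝ) 1 ×ˢ Set.Icc (-2:ℝ) 2 ×ˢ
        Set.Icc (0:ℝ) ((1+δ)/δ))).exists_bound_of_continuousOn hGc.continuousOn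
  have hdW : Function.Periodic (deriv W) (2*π) := periodic_deriv hWper
  refine ⟨max Cb 1, lt_of_lt_of_le one_pos (le_max_right _ _), ?_⟩
  intro x hp hn
  obtain ⟨qa, qb, pa, pb⟩ := x
  dsimp only [q₁, q₂, p₁, p₂] at hp hn ⊢
  have hppos : (0:ℝ) < 1 + δ := by linarith
  have h1 : |pa| ≤ |pb| := by nlinarith [mul_nonneg hδ.le (abs_nonneg pa)]
  have hpb2 : (1:ℝ)/2 ≤ pb ^ 2 := by
    nlinarith [mul_self_le_mul_self (abs_nonneg pa) h1, sq_abs pa, sq_abs pb]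
  have habs : (1:ℝ)/2 ≤ |pb| := by nlinarith [sq_abs pb, abs_nonneg pb]
  have hpb : pb ≠ 0 := by intro h0; rw [h0] at hpb2; norm_num at hpb2
  have hne : pb ≠ pa := by
    intro h0; rw [h0] at hp habs; nlinarith [abs_nonneg pa]
  have hu : pb - pa ≠ 0 := sub_ne_zero_of_ne hne
  have he : (1:ℝ) - pa / pb ≠ 0 := by
    rw [one_sub_div hpb]; exact div_ne_zero hu hpb
  have hr1 : |pa / pb| ≤ 1 / (1 + δ) := by
    rw [abs_div, div_le_div_iff₀ (abs_pos.mpr hpb) hppos]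
    nlinarith
  have hrmem : pa / pb ∈ Set.Icc (-1:ℝ) 1 := by
    have : |pa / pb| ≤ 1 := hr1.trans (by rw [div_le_one hppos]; linarith)
    exact ⟨(abs_le.mp this).1, (abs_le.mp this).2⟩
  have hvmem : 1 / pb ∈ Set.Icc (-2:ℝ) 2 := by
    have : |1 / pb| ≤ 2 := by
      rw [abs_div, abs_one, div_le_iff₀ (abs_pos.mpr hpb)]; linarith
    exact ⟨(abs_le.mp this).1, (abs_le.mp this).2⟩
  have hrge : pa / pb ≤ 1 / (1 + δ) := (le_abs_self _).trans hr1
  have hfr : (1:ℝ) - 1 / (1 + δ) = δ / (1 + δ) := by field_simp; ring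
  have h1me : δ / (1 + δ) ≤ 1 - pa / pb := by
    rw [← hfr]; linarith
  have h1mepos : (0:ℝ) < 1 - pa / pb := by
    have : (0:ℝ) < δ / (1 + δ) := by positivity
    linarith
  have hemem : (1 - pa / pb)⁻¹ ∈ Set.Icc (0:ℝ) ((1 + δ)/δ) := by
    constructor
    · exact inv_nonneg.mpr h1mepos.le
    · have h2 := inv_anti₀ (by positivity : (0:ℝ) < δ / (1 + δ)) h1me
      rwa [inv_div] at h2
  -- reduce the angle to [0, 2π]
  set n : ℤ := ⌊(qb - qa) / (2 * π)⌋ with hn_def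
  have hπ := Real.pi_pos
  have h2π : (0:ℝ) < 2 * π := by linarith
  have hf1 : (n:ℝ) ≤ (qb - qa) / (2 * π) := Int.floor_le _
  have hf2 : (qb - qa) / (2 * π) < n + 1 := Int.lt_floor_add_one _
  have hθ1 : (n:ℝ) * (2 * π) ≤ qb - qa := (le_div_iff₀ h2π).mp hf1
  have hθ2 : qb - qa < ((n:ℝ) + 1) * (2 * π) := (div_lt_iff₀ h2π).mp hf2
  have hθmem : qb - qa - (n:ℝ) * (2 * π) ∈ Set.Icc (0:ℝ) (2 * π) :=
    ⟨by linarith, by nlinarith⟩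
  have hm1 : W (qb - qa - (n:ℝ) * (2 * π)) = W (qb - qa) := hWper.sub_int_mul_eq n
  have hm2 : W1 (qb - qa - (n:ℝ) * (2 * π)) = W1 (qb - qa) := hW1per.sub_int_mul_eq n
  have hm3 : W2 (qb - qa - (n:ℝ) * (2 * π)) = W2 (qb - qa) := hW2per.sub_int_mul_eq n
  have hm4 : deriv W (qb - qa - (n:ℝ) * (2 * π)) = deriv W (qb - qa) := hdW.sub_int_mul_eq n
  have hb := hCb ((qb - qa - (n:ℝ) * (2 * π)), pa / pb, 1 / pb, (1 - pa / pb)⁻¹)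
    ⟨hθmem, hrmem, hvmem, hemem⟩
  simp only [Real.norm_eq_abs] at hb
  have hGle : Gaux γ T βp (W (qb - qa)) (W1 (qb - qa)) (W2 (qb - qa)) (deriv W (qb - qa))
      (pa / pb) (1 / pb) ((1 - pa / pb)⁻¹) ≤ max Cb 1 := by
    rw [← hm1, ← hm2, ← hm3, ← hm4]
    exact le_trans (le_abs_self _) (hb.trans (le_max_left _ _))
  rw [Lgen_eq_G γ T βp W W1 W2 hW hW1 hW2 hW1d hW2d qa qb pa pb hpb hu he]
  have hz : (pb:ℝ) ^ (-2 : ℤ) = (1 / pb) ^ 2 := by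
    rw [zpow_neg, one_div, inv_pow]
    norm_cast
  rw [hz]
  exact mul_le_mul_of_nonneg_right
    (mul_le_mul_of_nonneg_right hGle (sq_nonneg _)) (Real.exp_pos _).le
end

section
/- Define p₂^{(1)}(x) = p₂ + W(q₂ − q₁)/(p₂ − p₁) for p₂ ≠ p₁. For every δ > 0 there exists a constant C > 0 such that for all x = (q₁, q₂, p₁, p₂) with |p₂| > (1+δ)|p₁| and p₁² + p₂² ≥ 1, both |(L p₂^{(1)})(x) − W(q₂−q₁)·(2w(q₂−q₁) − γ p₁)/(p₂ − p₁)²| ≤ C·|p₂|^{−3} and |∂_{p₁} p₂^{(1)}(x)| ≤ C·|p₂|^{−2} hold. -/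
set_option maxHeartbeats 1000000


open Real MeasureTheory Set Filter

/-- The first correction `p₂⁽¹⁾ = p₂ + W(q₂ − q₁)/(p₂ − p₁)`. -/
noncomputable def pTwoOne (W : ℝ → ℝ) (x : Pt) : ℝ :=
  p₂ x + W (q₂ x - q₁ x) / (p₂ x - p₁ x)

lemma hdiv1 (K d : ℝ) {c : ℝ} (h : d - c ≠ 0) :
    HasDerivAt (fun s => K / (d - s)) (K / (d - c) ^ 2) c := by
  have h1 : HasDerivAt (fun s : ℝ => d - s) (-1) c := (hasDerivAt_id c).const_sub d
  have := (hasDerivAt_const c K).div h1 h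
  refine this.congr_deriv ?_
  ring

lemma hdiv2 (K d : ℝ) {c : ℝ} (h : d - c ≠ 0) :
    HasDerivAt (fun s => K / (d - s) ^ 2) (2 * K / (d - c) ^ 3) c := by
  have h1 : HasDerivAt (fun s : ℝ => (d - s) ^ 2) (2 * (d - c) * (-1)) c := by
    have := (((hasDerivAt_id c).const_sub d).pow 2)
    refine this.congr_deriv ?_
    norm_num
  have := (hasDerivAt_const c K).div h1 (pow_ne_zero 2 h)
  refine this.congr_deriv ?_
  field_simp
  ring

theorem stmt_7
    (γ T : ℝ) (hγ : 0 < γ) (hT : 0 < T)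
    (W : ℝ → ℝ)
    (hW : ContDiff ℝ (⊤ : ℕ∞) W) (hWper : Function.Periodic W (2 * π))
    (hWint : ∫ s in (0 : ℝ)..(2 * π), W s = 0) :
    ∀ δ > (0 : ℝ), ∃ C > (0 : ℝ), ∀ x : Pt,
      (1 + δ) * |p₁ x| < |p₂ x| → 1 ≤ p₁ x ^ 2 + p₂ x ^ 2 →
        |Lgen γ T W (pTwoOne W) x
            - W (q₂ x - q₁ x) * (2 * deriv W (q₂ x - q₁ x) - γ * p₁ x)
                / (p₂ x - p₁ x) ^ 2|
          ≤ C * |p₂ x| ^ (-3 : ℤ) ∧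
        |deriv (fun s => pTwoOne W (q₁ x, q₂ x, s, p₂ x)) (p₁ x)|
          ≤ C * |p₂ x| ^ (-2 : ℤ) := by
  intro δ hδ
  obtain ⟨M0, hM0⟩ := (isCompact_Icc : IsCompact (Icc (0:ℝ) (2*π))).exists_bound_of_continuousOn
    hW.continuous.continuousOn
  have hWb : ∀ s, |W s| ≤ |M0| + 1 := by
    intro s
    obtain ⟨y, hy, hys⟩ := hWper.exists_mem_Ico₀ Real.two_pi_pos s
    have h1 := hM0 y (Ico_subset_Icc_self hy)
    rw [hys]
    calc |W y| = ‖W y‖ := rfl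
      _ ≤ M0 := h1
      _ ≤ |M0| + 1 := by cases abs_cases M0 <;> linarith
  have hr1 : (1:ℝ) ≤ (1 + δ) / δ := by
    rw [le_div_iff₀ hδ]; linarith
  have hr0 : (0:ℝ) < (1 + δ) / δ := by positivity
  refine ⟨(2*γ*T+1) * (|M0|+1) * ((1+δ)/δ)^3, by positivity, ?_⟩
  intro x hp _hnorm
  have hc : |p₁ x| ≤ (1+δ) * |p₁ x| := le_mul_of_one_le_left (abs_nonneg _) (by linarith)
  have hcd : |p₁ x| < |p₂ x| := lt_of_le_of_lt hc hp
  have hd0 : 0 < |p₂ x| := lt_of_le_of_lt (abs_nonneg _) hcd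
  have hD : p₂ x - p₁ x ≠ 0 := by
    intro h
    have : p₂ x = p₁ x := by linarith [sub_eq_zero.mp h]
    rw [this] at hcd; exact lt_irrefl _ hcd
  have hD0 : 0 < |p₂ x - p₁ x| := abs_pos.mpr hD
  have hkey : |p₂ x| ≤ ((1+δ)/δ) * |p₂ x - p₁ x| := by
    rw [div_mul_eq_mul_div, le_div_iff₀ hδ]
    have h1 : |p₂ x| - |p₁ x| ≤ |p₂ x - p₁ x| := abs_sub_abs_le_abs_sub _ _
    nlinarith [abs_nonneg (p₁ x)]
  have hWd : ∀ y, HasDerivAt W (deriv W y) y := fun y =>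
    (hW.differentiable (by simp) y).hasDerivAt
  -- derivative in q₁
  have e1 : deriv (fun s => pTwoOne W (s, q₂ x, p₁ x, p₂ x)) (q₁ x)
      = -deriv W (q₂ x - q₁ x) / (p₂ x - p₁ x) := by
    have h1 : HasDerivAt (fun s : ℝ => W (q₂ x - s)) (deriv W (q₂ x - q₁ x) * (-1)) (q₁ x) := by
      exact (hWd (q₂ x - q₁ x)).comp (q₁ x) ((hasDerivAt_id (q₁ x)).const_sub (q₂ x))
    have h2 := (h1.div_const (p₂ x - p₁ x)).const_add (p₂ x)
    have h3 : (fun s => pTwoOne W (s, q₂ x, p₁ x, p₂ x))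
        = fun s => p₂ x + W (q₂ x - s) / (p₂ x - p₁ x) := rfl
    rw [h3, h2.deriv]; ring
  -- derivative in q₂
  have e2 : deriv (fun s => pTwoOne W (q₁ x, s, p₁ x, p₂ x)) (q₂ x)
      = deriv W (q₂ x - q₁ x) / (p₂ x - p₁ x) := by
    have h1 : HasDerivAt (fun s : ℝ => W (s - q₁ x)) (deriv W (q₂ x - q₁ x) * 1) (q₂ x) := by
      exact (hWd (q₂ x - q₁ x)).comp (q₂ x) ((hasDerivAt_id (q₂ x)).sub_const (q₁ x))
    have h2 := (h1.div_const (p₂ x - p₁ x)).const_add (p₂ x)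
    have h3 : (fun s => pTwoOne W (q₁ x, s, p₁ x, p₂ x))
        = fun s => p₂ x + W (s - q₁ x) / (p₂ x - p₁ x) := rfl
    rw [h3, h2.deriv]; ring
  -- derivative in p₁
  have e3 : deriv (fun s => pTwoOne W (q₁ x, q₂ x, s, p₂ x)) (p₁ x)
      = W (q₂ x - q₁ x) / (p₂ x - p₁ x) ^ 2 := by
    have h3 : (fun s => pTwoOne W (q₁ x, q₂ x, s, p₂ x))
        = fun s => p₂ x + W (q₂ x - q₁ x) / (p₂ x - s) := rfl
    rw [h3]
    exact ((hdiv1 (W (q₂ x - q₁ x)) (p₂ x) hD).const_add (p₂ x)).deriv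
  -- derivative in p₂
  have e4 : deriv (fun s => pTwoOne W (q₁ x, q₂ x, p₁ x, s)) (p₂ x)
      = 1 - W (q₂ x - q₁ x) / (p₂ x - p₁ x) ^ 2 := by
    have h1 : HasDerivAt (fun s : ℝ => W (q₂ x - q₁ x) / (s - p₁ x))
        (-(W (q₂ x - q₁ x)) / (p₂ x - p₁ x) ^ 2) (p₂ x) := by
      have := (hasDerivAt_const (p₂ x) (W (q₂ x - q₁ x))).div
        ((hasDerivAt_id (p₂ x)).sub_const (p₁ x)) hD
      refine this.congr_deriv ?_
      simp only [id]
      ring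
    have h2 := (hasDerivAt_id (p₂ x)).add h1
    have h3 : (fun s => pTwoOne W (q₁ x, q₂ x, p₁ x, s))
        = fun s => s + W (q₂ x - q₁ x) / (s - p₁ x) := rfl
    have h2' : HasDerivAt (fun s : ℝ => s + W (q₂ x - q₁ x) / (s - p₁ x))
        (1 + -W (q₂ x - q₁ x) / (p₂ x - p₁ x) ^ 2) (p₂ x) := h2
    rw [h3, h2'.deriv]; ring
  -- second derivative in p₁
  have e5 : iteratedDeriv 2 (fun s => pTwoOne W (q₁ x, q₂ x, s, p₂ x)) (p₁ x)
      = 2 * W (q₂ x - q₁ x) / (p₂ x - p₁ x) ^ 3 := by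
    rw [iteratedDeriv_succ, iteratedDeriv_one]
    have hc_ne : p₁ x ≠ p₂ x := fun h => hD (by rw [h]; ring)
    have hev : deriv (fun s => pTwoOne W (q₁ x, q₂ x, s, p₂ x))
        =ᶠ[nhds (p₁ x)] fun s => W (q₂ x - q₁ x) / (p₂ x - s) ^ 2 := by
      filter_upwards [isOpen_ne.mem_nhds hc_ne] with s hs
      have hs' : p₂ x - s ≠ 0 := sub_ne_zero.mpr (Ne.symm hs)
      have h3 : (fun s => pTwoOne W (q₁ x, q₂ x, s, p₂ x))
          = fun s => p₂ x + W (q₂ x - q₁ x) / (p₂ x - s) := rfl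
      rw [h3]
      exact ((hdiv1 (W (q₂ x - q₁ x)) (p₂ x) hs').const_add (p₂ x)).deriv
    rw [hev.deriv_eq]
    exact (hdiv2 (W (q₂ x - q₁ x)) (p₂ x) hD).deriv
  have hLE : Lgen γ T W (pTwoOne W) x
      - W (q₂ x - q₁ x) * (2 * deriv W (q₂ x - q₁ x) - γ * p₁ x) / (p₂ x - p₁ x) ^ 2
      = 2 * γ * T * W (q₂ x - q₁ x) / (p₂ x - p₁ x) ^ 3 := by
    simp only [Lgen]
    rw [e1, e2, e3, e4, e5]
    field_simp
    ring
  have hz3 : |p₂ x| ^ (-3 : ℤ) = (|p₂ x| ^ 3)⁻¹ := by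
    rw [zpow_neg, show ((3:ℤ)) = ((3:ℕ):ℤ) from rfl, zpow_natCast]
  have hz2 : |p₂ x| ^ (-2 : ℤ) = (|p₂ x| ^ 2)⁻¹ := by
    rw [zpow_neg, show ((2:ℤ)) = ((2:ℕ):ℤ) from rfl, zpow_natCast]
  constructor
  · rw [hLE, hz3, ← div_eq_mul_inv, abs_div, abs_pow, div_le_div_iff₀ (by positivity) (by positivity)]
    have habs : |2 * γ * T * W (q₂ x - q₁ x)| ≤ (2*γ*T+1) * (|M0|+1) := by
      rw [abs_mul, abs_of_pos (by positivity : (0:ℝ) < 2*γ*T)]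
      nlinarith [mul_le_mul_of_nonneg_left (hWb (q₂ x - q₁ x))
        (by positivity : (0:ℝ) ≤ 2*γ*T), abs_nonneg M0]
    have hpow : |p₂ x| ^ 3 ≤ ((1+δ)/δ) ^ 3 * |p₂ x - p₁ x| ^ 3 := by
      calc |p₂ x| ^ 3 ≤ (((1+δ)/δ) * |p₂ x - p₁ x|) ^ 3 :=
            pow_le_pow_left₀ (abs_nonneg _) hkey 3
        _ = _ := by ring
    calc |2 * γ * T * W (q₂ x - q₁ x)| * |p₂ x| ^ 3
        ≤ ((2*γ*T+1) * (|M0|+1)) * (((1+δ)/δ) ^ 3 * |p₂ x - p₁ x| ^ 3) :=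
          mul_le_mul habs hpow (by positivity) (by positivity)
      _ = (2*γ*T+1) * (|M0|+1) * ((1+δ)/δ) ^ 3 * |p₂ x - p₁ x| ^ 3 := by ring
  · rw [e3, hz2, ← div_eq_mul_inv, abs_div, abs_pow,
      div_le_div_iff₀ (by positivity) (by positivity)]
    have habs : |W (q₂ x - q₁ x)| ≤ (2*γ*T+1) * (|M0|+1) :=
      le_trans (hWb _) (le_mul_of_one_le_left (by positivity) (by nlinarith))
    have hpow : |p₂ x| ^ 2 ≤ ((1+δ)/δ) ^ 3 * |p₂ x - p₁ x| ^ 2 := by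
      have h1 : |p₂ x| ^ 2 ≤ (((1+δ)/δ) * |p₂ x - p₁ x|) ^ 2 :=
        pow_le_pow_left₀ (abs_nonneg _) hkey 2
      have h2 : ((1+δ)/δ) ^ 2 ≤ ((1+δ)/δ) ^ 3 := pow_le_pow_right₀ hr1 (by norm_num)
      calc |p₂ x| ^ 2 ≤ ((1+δ)/δ) ^ 2 * |p₂ x - p₁ x| ^ 2 := by
            calc |p₂ x| ^ 2 ≤ (((1+δ)/δ) * |p₂ x - p₁ x|) ^ 2 := h1
              _ = _ := by ring
        _ ≤ ((1+δ)/δ) ^ 3 * |p₂ x - p₁ x| ^ 2 :=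
            mul_le_mul_of_nonneg_right h2 (by positivity)
    calc |W (q₂ x - q₁ x)| * |p₂ x| ^ 2
        ≤ ((2*γ*T+1) * (|M0|+1)) * (((1+δ)/δ) ^ 3 * |p₂ x - p₁ x| ^ 2) :=
          mul_le_mul habs hpow (by positivity) (by positivity)
      _ = (2*γ*T+1) * (|M0|+1) * ((1+δ)/δ) ^ 3 * |p₂ x - p₁ x| ^ 2 := by ring
end

section
/- Let (X, 𝔉, π) be a probability space, let F : X → [1, ∞) be measurable, and let ε ∈ (0,1) be such that ∫ F^{1−ε} dπ = ∞. Then there exists a sequence (w_n)_{n≥0} increasing to infinity such that π(F > w_n) ≥ w_n^{ε/2 − 1} for every n. -/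
/-!
If `π(F > w) < w^(ε/2 - 1)` held for all large `w`, then by the layer-cake formula
`∫ F^(1-ε) dπ = (1-ε) ∫₀^∞ π(F > t) t^(-ε) dt`, and the integrand would be bounded near infinity by
`t^(-1-ε/2)`, which is integrable there; near zero it is bounded by `t^(-ε)`. So the integral would be
finite. Hence the inequality holds for arbitrarily large `w`, and a sequence is extracted from these.
-/

open MeasureTheory Filter Set

theorem Filter.exists_strictMono_tendsto_atTop_of_frequently {β : Type*} [LinearOrder β]
    [NoMaxOrder β] [(atTop : Filter β).IsCountablyGenerated] {P : β → Prop}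
    (h : ∃ᶠ x in atTop, P x) :
    ∃ w : ℕ → β, StrictMono w ∧ Tendsto w atTop atTop ∧ ∀ n, P (w n) := by
  obtain ⟨u, hu, hP⟩ := exists_seq_forall_of_frequently h
  obtain ⟨φ, hφ, huφ⟩ := strictMono_subseq_of_tendsto_atTop hu
  exact ⟨u ∘ φ, huφ, hu.comp hφ.tendsto_atTop, fun n => hP (φ n)⟩

section LayerCake

variable {α : Type*} [MeasurableSpace α] {μ : Measure α} {f : α → ℝ}

theorem setLIntegral_Ioc_meas_lt_mul_rpow_lt_top [IsFiniteMeasure μ] {p M : ℝ} (hp : 0 < p) :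
    ∫⁻ t in Ioc 0 M, μ {x | t < f x} * ENNReal.ofReal (t ^ (p - 1)) < ⊤ := by
  have hint : IntegrableOn (fun t : ℝ => t ^ (p - 1)) (Ioc 0 M) :=
    (intervalIntegral.intervalIntegrable_rpow' (by linarith)).1
  calc ∫⁻ t in Ioc 0 M, μ {x | t < f x} * ENNReal.ofReal (t ^ (p - 1))
      ≤ ∫⁻ t in Ioc 0 M, μ univ * ENNReal.ofReal (t ^ (p - 1)) :=
        lintegral_mono fun t => mul_le_mul_left (measure_mono (subset_univ _)) _
    _ = μ univ * ∫⁻ t in Ioc 0 M, ENNReal.ofReal (t ^ (p - 1)) :=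
        lintegral_const_mul' _ _ (measure_ne_top μ univ)
    _ < ⊤ := ENNReal.mul_lt_top (measure_lt_top μ univ) hint.setLIntegral_lt_top

theorem setLIntegral_Ioi_meas_lt_mul_rpow_lt_top {p q M : ℝ} (hpq : p < q) (hM : 0 < M)
    (htail : ∀ t, M < t → μ {x | t < f x} ≤ ENNReal.ofReal (t ^ (-q))) :
    ∫⁻ t in Ioi M, μ {x | t < f x} * ENNReal.ofReal (t ^ (p - 1)) < ⊤ := by
  have hint : IntegrableOn (fun t : ℝ => t ^ (p - q - 1)) (Ioi M) :=
    integrableOn_Ioi_rpow_of_lt (by linarith) hM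
  calc ∫⁻ t in Ioi M, μ {x | t < f x} * ENNReal.ofReal (t ^ (p - 1))
      ≤ ∫⁻ t in Ioi M, ENNReal.ofReal (t ^ (p - q - 1)) := by
        refine setLIntegral_mono' measurableSet_Ioi fun t (ht : M < t) => ?_
        have ht0 : 0 < t := hM.trans ht
        calc μ {x | t < f x} * ENNReal.ofReal (t ^ (p - 1))
            ≤ ENNReal.ofReal (t ^ (-q)) * ENNReal.ofReal (t ^ (p - 1)) :=
              mul_le_mul_left (htail t ht) _
          _ = ENNReal.ofReal (t ^ (p - q - 1)) := by
              rw [← ENNReal.ofReal_mul (by positivity), ← Real.rpow_add ht0]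
              ring_nf
    _ < ⊤ := hint.setLIntegral_lt_top

theorem lintegral_rpow_lt_top_of_meas_lt_le_rpow [IsFiniteMeasure μ] (hf0 : 0 ≤ᵐ[μ] f) (hf : AEMeasurable f μ)
    {p q : ℝ} (hp : 0 < p) (hpq : p < q)
    (htail : ∀ᶠ t in atTop, μ {x | t < f x} ≤ ENNReal.ofReal (t ^ (-q))) :
    ∫⁻ x, ENNReal.ofReal (f x ^ p) ∂μ < ⊤ := by
  obtain ⟨M, hM⟩ := eventually_atTop.1 htail
  set M' := max M 1
  have hM' : 0 < M' := zero_lt_one.trans_le (le_max_right _ _)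
  have htail' : ∀ t, M' < t → μ {x | t < f x} ≤ ENNReal.ofReal (t ^ (-q)) :=
    fun t ht => hM t ((le_max_left _ _).trans ht.le)
  rw [lintegral_rpow_eq_lintegral_meas_lt_mul μ hf0 hf hp, ← Ioc_union_Ioi_eq_Ioi hM'.le,
    lintegral_union measurableSet_Ioi (Ioc_disjoint_Ioi le_rfl)]
  exact ENNReal.mul_lt_top ENNReal.ofReal_lt_top <| ENNReal.add_lt_top.2
    ⟨setLIntegral_Ioc_meas_lt_mul_rpow_lt_top hp,
      setLIntegral_Ioi_meas_lt_mul_rpow_lt_top hpq hM' htail'⟩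

end LayerCake

theorem stmt_12 {X : Type*} [MeasurableSpace X]
    (π : Measure X) [IsProbabilityMeasure π]
    (F : X → ℝ) (hFmeas : Measurable F) (hF1 : ∀ x, 1 ≤ F x)
    (ε : ℝ) (hε : ε ∈ Set.Ioo (0 : ℝ) 1)
    (hinf : ∫⁻ x, ENNReal.ofReal (F x ^ (1 - ε)) ∂π = ⊤) :
    ∃ w : ℕ → ℝ, StrictMono w ∧ Tendsto w atTop atTop ∧
      ∀ n, 1 ≤ w n ∧
        ENNReal.ofReal ((w n) ^ (ε / 2 - 1)) ≤ π {x | w n < F x} := by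
  obtain ⟨hε0, hε1⟩ := hε
  have hfreq : ∃ᶠ v in atTop, ENNReal.ofReal (v ^ (ε / 2 - 1)) ≤ π {x | v < F x} := by
    by_contra hnot
    have htail : ∀ᶠ t in atTop, π {x | t < F x} ≤ ENNReal.ofReal (t ^ (-(1 - ε / 2))) := by
      filter_upwards [not_frequently.1 hnot] with t ht
      rw [neg_sub]
      exact (not_le.1 ht).le
    exact (lintegral_rpow_lt_top_of_meas_lt_le_rpow (.of_forall fun x => zero_le_one.trans (hF1 x))
      hFmeas.aemeasurable (by linarith) (by linarith) htail).ne hinf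
  obtain ⟨w, hw, hw_top, hw_good⟩ :=
    exists_strictMono_tendsto_atTop_of_frequently (hfreq.and_eventually (eventually_ge_atTop 1))
  exact ⟨w, hw, hw_top, fun n => (hw_good n).symm⟩
end

section
/- Let A > 0 and let φ : [1, ∞) → (0, ∞) be given by φ(s) = As/(2 + log s). Let g : [0, ∞) → [1, ∞) be continuous and satisfy the integral inequality g(t) ≤ g(0) + ∫₀ᵗ φ(g(s)) ds for all t ≥ 0. Then g(t) ≤ g(0) · exp(√(2At)) for all t ≥ 0. -/
open Real Set

/-!
Let `G(t) = g(0) + ∫₀ᵗ φ(g)`. Then `g ≤ G`, and since `φ` is increasing, `G' = φ(g) ≤ φ(G)`, so `G`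
is a supersolution of `y' = φ(y)`. For `φ(y) = Ay/(2 + log y)` the explicit solution shows that
`(2 + log y)² - 2At` is the conserved quantity; along `G` it is nonincreasing, which gives
`2 + log G(t) ≤ √((2 + log g(0))² + 2At) ≤ 2 + log g(0) + √(2At)`.
-/

theorem hasDerivWithinAt_integral_Ici {E : Type*} [NormedAddCommGroup E] [NormedSpace ℝ E]
    [CompleteSpace E] {F : ℝ → E} {a t : ℝ} (hF : ContinuousOn F (Ici a)) (ht : t ∈ Ici a) :
    HasDerivWithinAt (fun u => ∫ x in a..u, F x) (F t) (Ici a) t := by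
  have hint : IntervalIntegrable F MeasureTheory.volume a t :=
    (hF.mono (by rw [uIcc_of_le ht]; exact Icc_subset_Ici_self)).intervalIntegrable
  rcases (mem_Ici.1 ht).eq_or_lt with rfl | hat
  · exact intervalIntegral.integral_hasDerivWithinAt_right hint (t := Ioi a)
      ((hF.mono Ioi_subset_Ici_self).stronglyMeasurableAtFilter_nhdsWithin measurableSet_Ioi a)
      ((hF a ht).mono Ioi_subset_Ici_self)
  · exact (intervalIntegral.integral_hasDerivAt_right hint
      ((hF.mono Ioi_subset_Ici_self).stronglyMeasurableAtFilter isOpen_Ioi t hat)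
      (hF.continuousAt (Ici_mem_nhds hat))).hasDerivWithinAt

theorem div_add_log_le_div_add_log {c x y : ℝ} (hc : 1 ≤ c) (hx : 1 ≤ x) (hxy : x ≤ y) :
    x / (c + log x) ≤ y / (c + log y) := by
  have hx0 : 0 < x := by linarith
  have hlx : 0 ≤ log x := log_nonneg hx
  have hly : 0 ≤ log y := log_nonneg (hx.trans hxy)
  have hlog : log y - log x ≤ y / x - 1 := by
    rw [← log_div (by linarith) hx0.ne']
    exact log_le_sub_one_of_pos (div_pos (by linarith) hx0)
  have hcross : x * (log y - log x) ≤ y - x := by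
    calc x * (log y - log x) ≤ x * (y / x - 1) := by gcongr
      _ = y - x := by field_simp
  rw [div_le_div_iff₀ (by linarith) (by linarith)]
  nlinarith [mul_nonneg (sub_nonneg.2 hxy) (add_nonneg (sub_nonneg.2 hc) hlx)]

theorem sq_add_log_le_of_hasDerivWithinAt {G G' : ℝ → ℝ} {a c A : ℝ}
    (hG : ∀ t ∈ Ici a, HasDerivWithinAt G (G' t) (Ici a) t)
    (hpos : ∀ t ∈ Ici a, 0 < G t)
    (hbound : ∀ t ∈ Ioi a, (c + log (G t)) * G' t ≤ A * G t) :
    ∀ t ∈ Ici a, (c + log (G t)) ^ 2 ≤ (c + log (G a)) ^ 2 + 2 * A * (t - a) := by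
  have hψ : ∀ t ∈ Ici a, HasDerivWithinAt (fun u => (c + log (G u)) ^ 2 - 2 * A * u)
      (2 * (c + log (G t)) * (G' t / G t) - 2 * A) (Ici a) t := fun t ht => by
    have h := ((((hG t ht).log (hpos t ht).ne').const_add c).pow 2).sub
      ((hasDerivWithinAt_id t (Ici a)).const_mul (2 * A))
    exact h.congr_deriv (by norm_num)
  have hanti : AntitoneOn (fun u => (c + log (G u)) ^ 2 - 2 * A * u) (Ici a) := by
    refine antitoneOn_of_hasDerivWithinAt_nonpos (convex_Ici a)
      (f' := fun t => 2 * (c + log (G t)) * (G' t / G t) - 2 * A)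
      (fun t ht => (hψ t ht).continuousWithinAt) (fun t ht => ?_) (fun t ht => ?_)
    · rw [interior_Ici] at ht ⊢
      exact (hψ t (mem_Ici_of_Ioi ht)).mono Ioi_subset_Ici_self
    · rw [interior_Ici] at ht
      have h := hbound t ht
      rw [← div_le_iff₀ (hpos t (mem_Ici_of_Ioi ht)), mul_div_assoc] at h
      linarith
  intro t ht
  have := hanti self_mem_Ici ht ht
  simp only at this
  linarith

theorem le_mul_exp_sqrt_of_sq_add_log_le {c s x y : ℝ} (hc : 0 ≤ c) (hx : 1 ≤ x) (hy : 0 < y)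
    (hs : 0 ≤ s) (h : (c + log y) ^ 2 ≤ (c + log x) ^ 2 + s) : y ≤ x * exp (√s) := by
  have hcx : 0 ≤ c + log x := add_nonneg hc (log_nonneg hx)
  have hsq : √s ^ 2 = s := sq_sqrt hs
  have hlog : log y ≤ log x + √s := by
    nlinarith [sqrt_nonneg s, abs_le_of_sq_le_sq' (h.trans (by nlinarith [sqrt_nonneg s] :
      (c + log x) ^ 2 + s ≤ (c + log x + √s) ^ 2)) (by positivity)]
  calc y = exp (log y) := (exp_log hy).symm
    _ ≤ exp (log x + √s) := exp_le_exp.2 hlog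
    _ = x * exp (√s) := by rw [exp_add, exp_log (by linarith)]

theorem stmt_16 (A : ℝ) (hA : 0 < A) (g : ℝ → ℝ)
    (hgc : ContinuousOn g (Ici (0 : ℝ)))
    (hg1 : ∀ t ∈ Ici (0 : ℝ), 1 ≤ g t)
    (hint : ∀ t ∈ Ici (0 : ℝ),
      g t ≤ g 0 + ∫ s in (0 : ℝ)..t, A * g s / (2 + Real.log (g s))) :
    ∀ t ∈ Ici (0 : ℝ), g t ≤ g 0 * exp (Real.sqrt (2 * A * t)) := by
  set F : ℝ → ℝ := fun s => A * g s / (2 + log (g s))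
  set G : ℝ → ℝ := fun t => g 0 + ∫ s in (0 : ℝ)..t, F s
  have hden : ∀ t ∈ Ici (0 : ℝ), 0 < 2 + log (g t) := fun t ht => by
    linarith [log_nonneg (hg1 t ht)]
  have hFc : ContinuousOn F (Ici 0) :=
    (continuousOn_const.mul hgc).div (continuousOn_const.add (hgc.log fun t ht =>
      (zero_lt_one.trans_le (hg1 t ht)).ne')) fun t ht => (hden t ht).ne'
  have hG1 : ∀ t ∈ Ici (0 : ℝ), 1 ≤ G t := fun t ht => (hg1 t ht).trans (hint t ht)
  have hsuper : ∀ t ∈ Ioi (0 : ℝ), (2 + log (G t)) * F t ≤ A * G t := fun t ht => by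
    have hmono := div_add_log_le_div_add_log one_le_two (hg1 t (mem_Ici_of_Ioi ht))
      (hint t (mem_Ici_of_Ioi ht))
    have hGden : 0 < 2 + log (G t) := by linarith [log_nonneg (hG1 t (mem_Ici_of_Ioi ht))]
    calc (2 + log (G t)) * F t = A * (g t / (2 + log (g t))) * (2 + log (G t)) := by ring
      _ ≤ A * (G t / (2 + log (G t))) * (2 + log (G t)) := by gcongr
      _ = A * G t := by field_simp
  have hlyap := sq_add_log_le_of_hasDerivWithinAt
    (fun t ht => (hasDerivWithinAt_integral_Ici hFc ht).const_add (g 0))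
    (fun t ht => zero_lt_one.trans_le (hG1 t ht)) hsuper
  intro t ht
  have hG0 : G 0 = g 0 := by simp [G]
  calc g t ≤ G t := hint t ht
    _ ≤ g 0 * exp (√(2 * A * t)) := by
      refine le_mul_exp_sqrt_of_sq_add_log_le zero_le_two (hg1 0 self_mem_Ici)
        (zero_lt_one.trans_le (hG1 t ht)) (mul_nonneg (by positivity) ht) ?_
      simpa [hG0] using hlyap t ht
end
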